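/- arXiv:1110.5439 — 9 statements merged into one kernel-verified Lean document; each statement's English description precedes it below -/
import Mathlib

section
/- For every ε ≥ 0, every unweighted congestion game with affine latency functions, every ε-approximate pure Nash equilibrium S of the game, and every strategy profile O of the game, it holds that SUM(S) ≤ ((1+ε)(z²+3z+1)/(2z−ε))·SUM(O), where ψ = (1+ε+√(ε²+6ε+5))/2 and z = ⌊ψ⌋. In particular, the ε-approximate price of anarchy of any such game is at most (1+ε)(z²+3z+1)/(2z−ε). -/
open Finset

namespace CG

variable {n : ℕ} {E : Type*} [Fintype E] [DecidableEq E]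

/-- The congestion (total weight) of resource `e` in profile `S`. -/
noncomputable def load (w : Fin n → ℝ) (S : Fin n → Finset E) (e : E) : ℝ :=
  ∑ i ∈ univ.filter fun i => e ∈ S i, w i

/-- The cost of player `i` in profile `S`. -/
noncomputable def cost (w : Fin n → ℝ) (ℓ : E → ℝ → ℝ) (S : Fin n → Finset E) (i : Fin n) : ℝ :=
  ∑ e ∈ S i, ℓ e (load w S e)

/-- The social cost `SUM(S)`, the sum of the players' costs. -/
noncomputable def social (w : Fin n → ℝ) (ℓ : E → ℝ → ℝ) (S : Fin n → Finset E) : ℝ :=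
  ∑ i, cost w ℓ S i

/-- The congestion of resource `e` due to the players preceding `i` (used for one-round walks). -/
noncomputable def preLoad (w : Fin n → ℝ) (S : Fin n → Finset E) (i : Fin n) (e : E) : ℝ :=
  ∑ j ∈ univ.filter fun j => j < i ∧ e ∈ S j, w j

end CG

open CG

/-- Exchanging the order of summation over players and resources. -/
lemma CGaux.sum_profile {n : ℕ} {E : Type*} [Fintype E] [DecidableEq E]
    (T : Fin n → Finset E) (f : E → ℝ) :
    ∑ i, ∑ e ∈ T i, f e
      = ∑ e : E, ((univ.filter fun i => e ∈ T i).card : ℝ) * f e := by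
  have h1 : ∀ i : Fin n, ∑ e ∈ T i, f e = ∑ e : E, if e ∈ T i then f e else 0 := by
    intro i
    rw [← Finset.sum_filter]
    congr 1
    simp
  simp_rw [h1]
  rw [Finset.sum_comm]
  refine Finset.sum_congr rfl fun e _ => ?_
  rw [← Finset.sum_filter, Finset.sum_const, nsmul_eq_mul]

/-- The key arithmetic inequality on nonnegative integers. -/
lemma CGaux.key_ineq (z : ℤ) (hz1 : 1 ≤ z) (s o : ℕ) :
    (2*(z:ℝ)+1) * o * (s+1) ≤ (s:ℝ)^2 + ((z:ℝ)^2+3*z+1) * o^2 := by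
  have hz1R : (1:ℝ) ≤ (z:ℝ) := by exact_mod_cast hz1
  rcases Nat.lt_or_ge o 2 with ho | ho
  · interval_cases o
    · simp
    · have h : (0:ℤ) ≤ ((s:ℤ) - z) * ((s:ℤ) - z - 1) := by
        rcases le_or_gt ((s:ℤ) - z) 0 with h | h
        · have h2 : (s:ℤ) - z - 1 ≤ 0 := by linarith
          nlinarith [mul_nonneg (neg_nonneg.mpr h) (neg_nonneg.mpr h2)]
        · exact mul_nonneg (by linarith) (by linarith)
      have hR : (0:ℝ) ≤ ((s:ℝ) - z) * ((s:ℝ) - z - 1) := by exact_mod_cast h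
      push_cast
      nlinarith [hR]
  · have hoR : (2:ℝ) ≤ (o:ℝ) := by exact_mod_cast ho
    nlinarith [sq_nonneg (2*(s:ℝ) - (2*(z:ℝ)+1)*(o:ℝ)),
      mul_nonneg (by linarith : (0:ℝ) ≤ (o:ℝ)) (by linarith : (0:ℝ) ≤ (o:ℝ) - 2),
      mul_nonneg (mul_nonneg (by linarith : (0:ℝ) ≤ (o:ℝ)) (by linarith : (0:ℝ) ≤ (o:ℝ)-2)) (by linarith : (0:ℝ) ≤ (z:ℝ))]

set_option maxHeartbeats 1000000 in
theorem eps_poa_unweighted_affine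
    (ε : ℝ) (hε : 0 ≤ ε)
    (n : ℕ) (E : Type*) [Fintype E] [DecidableEq E]
    (w : Fin n → ℝ) (hw : ∀ i, w i = 1)
    (Strat : Fin n → Set (Finset E)) (hStrat : ∀ i, (Strat i).Nonempty)
    (α β : E → ℝ) (hα : ∀ e, 0 ≤ α e) (hβ : ∀ e, 0 ≤ β e)
    (ℓ : E → ℝ → ℝ) (hℓ : ∀ e x, ℓ e x = α e * x + β e)
    (S O : Fin n → Finset E)
    (hS : ∀ i, S i ∈ Strat i) (hO : ∀ i, O i ∈ Strat i)
    (hNE : ∀ i, ∀ t ∈ Strat i,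
      cost w ℓ S i ≤ (1 + ε) * cost w ℓ (Function.update S i t) i)
    (ψ : ℝ) (hψ : ψ = (1 + ε + Real.sqrt (ε ^ 2 + 6 * ε + 5)) / 2)
    (z : ℤ) (hz : z = ⌊ψ⌋) :
    social w ℓ S ≤
      ((1 + ε) * ((z : ℝ) ^ 2 + 3 * (z : ℝ) + 1) / (2 * (z : ℝ) - ε)) * social w ℓ O := by
  -- integer loads
  set sN : E → ℕ := fun e => (univ.filter fun i => e ∈ S i).card with hsN
  set oN : E → ℕ := fun e => (univ.filter fun i => e ∈ O i).card with hoN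
  have hloadS : ∀ e, load w S e = (sN e : ℝ) := by
    intro e; simp [load, hw, hsN]
  -- facts about z
  have hψ1 : 1 + ε ≤ ψ := by
    have h1 : (1 + ε) = Real.sqrt ((1+ε)^2) := (Real.sqrt_sq (by linarith)).symm
    have h2 : Real.sqrt ((1+ε)^2) ≤ Real.sqrt (ε ^ 2 + 6 * ε + 5) := by
      apply Real.sqrt_le_sqrt; nlinarith
    rw [hψ]; nlinarith [h1 ▸ h2]
  have hz1 : 1 ≤ z := by
    rw [hz]
    have : (1:ℤ) ≤ ⌊(1+ε : ℝ)⌋ := by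
      rw [Int.le_floor]; push_cast; linarith
    exact le_trans this (Int.floor_mono hψ1)
  have hz1R : (1:ℝ) ≤ (z:ℝ) := by exact_mod_cast hz1
  have hzε : ε < (z:ℝ) := by
    have h1 : ((⌊(1+ε:ℝ)⌋ : ℤ) : ℝ) > (1+ε) - 1 := Int.sub_one_lt_floor _
    have h2 : (⌊(1+ε:ℝ)⌋ : ℤ) ≤ z := hz ▸ Int.floor_mono hψ1
    have h2R : ((⌊(1+ε:ℝ)⌋ : ℤ) : ℝ) ≤ (z:ℝ) := by exact_mod_cast h2
    linarith
  have hden : 0 < 2*(z:ℝ) - ε := by linarith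
  have hεp : (0:ℝ) ≤ 1 + ε := by linarith
  -- abbreviations
  set K : ℝ := (z:ℝ)^2 + 3*(z:ℝ) + 1 with hK
  have hK2z : 2*(z:ℝ)+1 ≤ K := by rw [hK]; nlinarith
  set A : ℝ := ∑ e : E, α e * (sN e : ℝ)^2 with hA
  set BS : ℝ := ∑ e : E, β e * (sN e : ℝ) with hBS
  set AO : ℝ := ∑ e : E, α e * (oN e : ℝ)^2 with hAO
  set BO : ℝ := ∑ e : E, β e * (oN e : ℝ) with hBO
  have hBSnn : 0 ≤ BS := Finset.sum_nonneg fun e _ => mul_nonneg (hβ e) (Nat.cast_nonneg _)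
  have hBOnn : 0 ≤ BO := Finset.sum_nonneg fun e _ => mul_nonneg (hβ e) (Nat.cast_nonneg _)
  have hAOnn : 0 ≤ AO := Finset.sum_nonneg fun e _ => mul_nonneg (hα e) (by positivity)
  -- social costs as resource sums
  have hSS : social w ℓ S = A + BS := by
    rw [social]
    unfold cost
    rw [CGaux.sum_profile S (fun e => ℓ e (load w S e))]
    rw [hA, hBS, ← Finset.sum_add_distrib]
    refine Finset.sum_congr rfl fun e _ => ?_
    rw [hℓ, hloadS]
    ring
  have hloadO : ∀ e, load w O e = (oN e : ℝ) := by
    intro e; simp [load, hw, hoN]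
  have hSO : social w ℓ O = AO + BO := by
    rw [social]
    unfold cost
    rw [CGaux.sum_profile O (fun e => ℓ e (load w O e))]
    rw [hAO, hBO, ← Finset.sum_add_distrib]
    refine Finset.sum_congr rfl fun e _ => ?_
    rw [hℓ, hloadO]
    ring
  -- deviation bound from the approximate equilibrium
  have hdev : ∀ i, cost w ℓ S i ≤ (1+ε) * ∑ e ∈ O i, (α e * ((sN e : ℝ)+1) + β e) := by
    intro i
    refine (hNE i (O i) (hO i)).trans ?_
    apply mul_le_mul_of_nonneg_left _ hεp
    have h1 : cost w ℓ (Function.update S i (O i)) i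
        = ∑ e ∈ O i, ℓ e (load w (Function.update S i (O i)) e) := by
      unfold cost; rw [Function.update_self]
    rw [h1]
    refine Finset.sum_le_sum fun e he => ?_
    rw [hℓ]
    have hload : load w (Function.update S i (O i)) e ≤ (sN e : ℝ) + 1 := by
      have hsub : (univ.filter fun j => e ∈ Function.update S i (O i) j)
          ⊆ insert i (univ.filter fun j => e ∈ S j) := by
        intro j hj
        simp only [mem_filter, mem_univ, true_and, mem_insert] at hj ⊢
        by_cases h : j = i
        · exact Or.inl h
        · rw [Function.update_of_ne h] at hj; exact Or.inr hj
      have hcard : (univ.filter fun j => e ∈ Function.update S i (O i) j).card ≤ sN e + 1 := by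
        refine (Finset.card_le_card hsub).trans ?_
        exact (Finset.card_insert_le _ _)
      have hval : load w (Function.update S i (O i)) e
          = ((univ.filter fun j => e ∈ Function.update S i (O i) j).card : ℝ) := by
        simp [load, hw]
      rw [hval]
      exact_mod_cast hcard
    have := mul_le_mul_of_nonneg_left hload (hα e)
    linarith
  -- sum over players
  have hsum : social w ℓ S ≤ (1+ε) * ∑ e : E, (oN e : ℝ) * (α e * ((sN e : ℝ)+1) + β e) := by
    rw [social]
    calc ∑ i, cost w ℓ S i
        ≤ ∑ i, (1+ε) * ∑ e ∈ O i, (α e * ((sN e : ℝ)+1) + β e) :=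
          Finset.sum_le_sum fun i _ => hdev i
      _ = (1+ε) * ∑ i, ∑ e ∈ O i, (α e * ((sN e : ℝ)+1) + β e) := by
          rw [Finset.mul_sum]
      _ = (1+ε) * ∑ e : E, (oN e : ℝ) * (α e * ((sN e : ℝ)+1) + β e) := by
          rw [CGaux.sum_profile O (fun e => α e * ((sN e : ℝ)+1) + β e)]
  -- multiply through by (2z+1) and use the key inequality per resource
  have hstep : (2*(z:ℝ)+1) * social w ℓ S
      ≤ (1+ε)*A + (1+ε)*K*AO + (2*(z:ℝ)+1)*(1+ε)*BO := by
    have h1 : (2*(z:ℝ)+1) * social w ℓ S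
        ≤ ∑ e : E, (2*(z:ℝ)+1) * ((1+ε) * ((oN e : ℝ) * (α e * ((sN e : ℝ)+1) + β e))) := by
      rw [← Finset.mul_sum, ← Finset.mul_sum]
      have h2z : (0:ℝ) ≤ 2*(z:ℝ)+1 := by linarith
      exact mul_le_mul_of_nonneg_left hsum h2z
    refine h1.trans ?_
    rw [hA, hAO, hBO, Finset.mul_sum, Finset.mul_sum, Finset.mul_sum,
      ← Finset.sum_add_distrib, ← Finset.sum_add_distrib]
    refine Finset.sum_le_sum fun e _ => ?_
    have hkey := CGaux.key_ineq z hz1 (sN e) (oN e)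
    have hmul := mul_le_mul_of_nonneg_left hkey (mul_nonneg hεp (hα e))
    rw [hK]
    linarith [hmul]
  -- combine
  have hfinal : (2*(z:ℝ) - ε) * social w ℓ S ≤ (1+ε) * K * social w ℓ O := by
    have hGoal : (2*(z:ℝ) - ε) * social w ℓ S
        = (2*(z:ℝ)+1) * social w ℓ S - (1+ε) * social w ℓ S := by ring
    rw [hGoal, hSS, hSO]
    have h1 : (1+ε)*(2*(z:ℝ)+1) ≤ (1+ε)*K := mul_le_mul_of_nonneg_left hK2z hεp
    have hBOK := mul_le_mul_of_nonneg_right h1 hBOnn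
    rw [hSS] at hstep
    linarith [hstep, hBOK, mul_nonneg hεp hBSnn]
  rw [div_mul_eq_mul_div, le_div_iff₀ hden]
  linarith [hfinal]
end

section
/- For every ε ∈ [0,1] and every unweighted congestion game with affine latency functions, there exists an ε-approximate pure Nash equilibrium S such that SUM(S) ≤ ((1+√3)/(ε+√3))·SUM(O) for every strategy profile O. In particular, the ε-approximate price of stability of any such game is at most (1+√3)/(ε+√3). -/
open Finset

open CG

section Aux

variable {n : ℕ} {E : Type*} [Fintype E] [DecidableEq E]

private lemma aux_load_nat (w : Fin n → ℝ) (hw : ∀ i, w i = 1) (S : Fin n → Finset E) (e : E) :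
    load w S e = ((univ.filter fun i => e ∈ S i).card : ℝ) := by
  rw [load, Finset.sum_congr rfl fun i _ => hw i, Finset.sum_const, nsmul_eq_mul, mul_one]

private lemma aux_load_nonneg (w : Fin n → ℝ) (hw : ∀ i, w i = 1) (S : Fin n → Finset E)
    (e : E) : 0 ≤ load w S e := by
  rw [aux_load_nat w hw]; exact Nat.cast_nonneg _

private lemma aux_load_one_le (w : Fin n → ℝ) (hw : ∀ i, w i = 1) (S : Fin n → Finset E)
    {e : E} {i : Fin n} (he : e ∈ S i) : 1 ≤ load w S e := by
  rw [load]
  have h1 : w i ≤ ∑ j ∈ univ.filter fun j => e ∈ S j, w j := by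
    apply Finset.single_le_sum (f := w)
    · intro j _; rw [hw j]; norm_num
    · simp [he]
  rw [hw i] at h1; exact h1

private lemma aux_load_update (w : Fin n → ℝ) (hw : ∀ i, w i = 1) (S : Fin n → Finset E)
    (i : Fin n) (t : Finset E) (e : E) :
    load w (Function.update S i t) e
      = load w S e + (if e ∈ t then 1 else 0) - (if e ∈ S i then 1 else 0) := by
  have h1 : ∀ T : Fin n → Finset E, load w T e = ∑ j, (if e ∈ T j then w j else 0) := by
    intro T; rw [load, Finset.sum_filter]
  rw [h1, h1]
  rw [← Finset.add_sum_erase univ _ (mem_univ i),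
      ← Finset.add_sum_erase univ (fun j => if e ∈ S j then w j else 0) (mem_univ i)]
  have h2 : ∑ j ∈ univ.erase i, (if e ∈ Function.update S i t j then w j else 0)
      = ∑ j ∈ univ.erase i, (if e ∈ S j then w j else 0) := by
    refine Finset.sum_congr rfl fun j hj => ?_
    rw [Function.update_of_ne (Finset.ne_of_mem_erase hj)]
  rw [h2, Function.update_self, hw i]
  split_ifs <;> ring

private lemma aux_count (w : Fin n → ℝ) (hw : ∀ i, w i = 1) (T : Fin n → Finset E)
    (e : E) (C : ℝ) : (∑ i, if e ∈ T i then C else 0) = load w T e * C := by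
  rw [← Finset.sum_filter, Finset.sum_const, nsmul_eq_mul, aux_load_nat w hw]

private lemma aux_cost (w : Fin n → ℝ) (α β : E → ℝ) (ℓ : E → ℝ → ℝ)
    (hℓ : ∀ e x, ℓ e x = α e * x + β e) (S : Fin n → Finset E) (i : Fin n) :
    cost w ℓ S i = ∑ e, (if e ∈ S i then α e * load w S e + β e else 0) := by
  have h0 : ∑ e, (if e ∈ S i then α e * load w S e + β e else 0)
      = ∑ e ∈ univ ∩ S i, (α e * load w S e + β e) := Finset.sum_ite_mem _ _ _
  rw [h0, Finset.univ_inter, cost]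
  exact Finset.sum_congr rfl fun e _ => hℓ e _

private lemma aux_social (w : Fin n → ℝ) (hw : ∀ i, w i = 1) (α β : E → ℝ) (ℓ : E → ℝ → ℝ)
    (hℓ : ∀ e x, ℓ e x = α e * x + β e) (T : Fin n → Finset E) :
    social w ℓ T = ∑ e, load w T e * (α e * load w T e + β e) := by
  rw [social, Finset.sum_congr rfl fun i _ => aux_cost w α β ℓ hℓ T i, Finset.sum_comm]
  exact Finset.sum_congr rfl fun e _ => aux_count w hw T e _

/-- The key integer inequality, with `s = √3`. -/
private lemma aux_K (s : ℝ) (hs : s ^ 2 = 3) (hs0 : 0 ≤ s) (l o : ℕ) :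
    0 ≤ (2 - s) * (l : ℝ) ^ 2 - 2 * l * o + (2 + s) * ((o : ℝ) ^ 2 - o) + s * l := by
  have hsu : s < 2 := by nlinarith
  have hsl : (11 : ℝ) / 8 ≤ s := by nlinarith
  have hl0 : (0 : ℝ) ≤ (l : ℝ) := Nat.cast_nonneg l
  rcases Nat.lt_or_ge o 2 with h | h
  · interval_cases o
    · push_cast; nlinarith [sq_nonneg (l : ℝ)]
    · push_cast
      have hll : (l : ℝ) ≤ (l : ℝ) ^ 2 := by
        have := Nat.le_self_pow (two_ne_zero) l
        exact_mod_cast this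
      nlinarith
  · have ho : (2 : ℝ) ≤ (o : ℝ) := by exact_mod_cast h
    have h2s : (0 : ℝ) < 2 - s := by linarith
    nlinarith [sq_nonneg (2 * (2 - s) * (l : ℝ) + s - 2 * (o : ℝ)),
      mul_nonneg (sub_nonneg.mpr ho) (by linarith : (0:ℝ) ≤ s - 1), h2s, hs]

/-- The per-resource master inequality. -/
private lemma aux_key (ε s : ℝ) (hε0 : 0 ≤ ε) (hε1 : ε ≤ 1) (hs : s ^ 2 = 3) (hs0 : 0 ≤ s)
    (a b : ℝ) (ha : 0 ≤ a) (hb : 0 ≤ b) (l o : ℕ) :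
    (l : ℝ) * (a * l + b)
      + (1 + ε * (((1 + s) / (ε + s) - 1) / (1 + ε)))
        * ((a * ((1 + ε) / 2 * (o : ℝ) ^ 2 + (1 - ε) / 2 * o) + b * o)
          - (a * ((1 + ε) / 2 * (l : ℝ) ^ 2 + (1 - ε) / 2 * l) + b * l))
      + (((1 + s) / (ε + s) - 1) / (1 + ε))
        * ((o : ℝ) * (a * ((1 + ε) * l + 1) + b) - (l : ℝ) * (a * ((1 + ε) * l - ε) + b))
      ≤ (1 + s) / (ε + s) * ((o : ℝ) * (a * o + b)) := by
  have hsl : (11 : ℝ) / 8 ≤ s := by nlinarith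
  have hden : (0 : ℝ) < ε + s := by linarith
  have h1ε : (0 : ℝ) < 1 + ε := by linarith
  have hρ1 : (1 : ℝ) ≤ (1 + s) / (ε + s) := by
    rw [le_div_iff₀ hden]; linarith
  have hK := aux_K s hs hs0 l o
  have hidentity :
      (1 + s) / (ε + s) * ((o : ℝ) * (a * o + b))
        - ((l : ℝ) * (a * l + b)
          + (1 + ε * (((1 + s) / (ε + s) - 1) / (1 + ε)))
            * ((a * ((1 + ε) / 2 * (o : ℝ) ^ 2 + (1 - ε) / 2 * o) + b * o)
              - (a * ((1 + ε) / 2 * (l : ℝ) ^ 2 + (1 - ε) / 2 * l) + b * l))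
          + (((1 + s) / (ε + s) - 1) / (1 + ε))
            * ((o : ℝ) * (a * ((1 + ε) * l + 1) + b) - (l : ℝ) * (a * ((1 + ε) * l - ε) + b)))
      = a * (((1 + s) / (ε + s) - 1) / 2)
          * ((2 - s) * (l : ℝ) ^ 2 - 2 * l * o + (2 + s) * ((o : ℝ) ^ 2 - o) + s * l)
        + b * ((1 + s) / (ε + s) - 1) * l := by
    field_simp
    ring
  have h2 : 0 ≤ a * (((1 + s) / (ε + s) - 1) / 2)
        * ((2 - s) * (l : ℝ) ^ 2 - 2 * l * o + (2 + s) * ((o : ℝ) ^ 2 - o) + s * l)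
      + b * ((1 + s) / (ε + s) - 1) * l := by
    have := mul_nonneg (mul_nonneg ha (by linarith : (0:ℝ) ≤ ((1 + s) / (ε + s) - 1) / 2)) hK
    have := mul_nonneg (mul_nonneg hb (by linarith : (0:ℝ) ≤ (1 + s) / (ε + s) - 1))
      (Nat.cast_nonneg l : (0:ℝ) ≤ (l : ℝ))
    linarith
  linarith [hidentity, h2]

end Aux

theorem eps_pos_unweighted_affine
    (ε : ℝ) (hε0 : 0 ≤ ε) (hε1 : ε ≤ 1)
    (n : ℕ) (E : Type*) [Fintype E] [DecidableEq E]
    (w : Fin n → ℝ) (hw : ∀ i, w i = 1)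
    (Strat : Fin n → Set (Finset E)) (hStrat : ∀ i, (Strat i).Nonempty)
    (α β : E → ℝ) (hα : ∀ e, 0 ≤ α e) (hβ : ∀ e, 0 ≤ β e)
    (ℓ : E → ℝ → ℝ) (hℓ : ∀ e x, ℓ e x = α e * x + β e) :
    ∃ S : Fin n → Finset E, (∀ i, S i ∈ Strat i) ∧
      (∀ i, ∀ t ∈ Strat i,
        cost w ℓ S i ≤ (1 + ε) * cost w ℓ (Function.update S i t) i) ∧
      ∀ O : Fin n → Finset E, (∀ i, O i ∈ Strat i) →
        social w ℓ S ≤ ((1 + Real.sqrt 3) / (ε + Real.sqrt 3)) * social w ℓ O := by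
  classical
  set s : ℝ := Real.sqrt 3 with hsdef
  have hs : s ^ 2 = 3 := Real.sq_sqrt (by norm_num)
  have hs0 : 0 ≤ s := Real.sqrt_nonneg 3
  -- the modified potential
  set g : E → ℝ → ℝ :=
    fun e x => α e * ((1 + ε) / 2 * x ^ 2 + (1 - ε) / 2 * x) + β e * x with hgdef
  set Ψ : (Fin n → Finset E) → ℝ := fun T => ∑ e, g e (load w T e) with hΨdef
  -- a minimizer of Ψ over feasible profiles
  obtain ⟨S, hSfeas, hSmin⟩ :=
    Set.exists_min_image {T : Fin n → Finset E | ∀ i, T i ∈ Strat i} Ψ (Set.toFinite _)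
      ⟨fun i => (hStrat i).some, fun i => (hStrat i).some_mem⟩
  have hSfeas' : ∀ i, S i ∈ Strat i := hSfeas
  have hupd : ∀ (i : Fin n) (t : Finset E), t ∈ Strat i →
      (Function.update S i t) ∈ {T : Fin n → Finset E | ∀ i, T i ∈ Strat i} := by
    intro i t ht j
    rcases eq_or_ne j i with rfl | hne
    · simpa using ht
    · rw [Function.update_of_ne hne]; exact hSfeas' j
  refine ⟨S, hSfeas', ?_, ?_⟩
  · -- ε-approximate Nash equilibrium
    intro i t ht
    set S' := Function.update S i t with hS'def
    have hmin : Ψ S ≤ Ψ S' := hSmin _ (hupd i t ht)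
    have hcost1 := aux_cost w α β ℓ hℓ S i
    have hcost2 := aux_cost w α β ℓ hℓ S' i
    have hS'i : S' i = t := Function.update_self i t S
    have key : ∑ e, ((if e ∈ S i then α e * load w S e + β e else 0)
        - (1 + ε) * (if e ∈ t then α e * load w S' e + β e else 0)
        + (g e (load w S' e) - g e (load w S e))) ≤ 0 := by
      apply Finset.sum_nonpos
      intro e _
      have hlu : load w S' e
          = load w S e + (if e ∈ t then 1 else 0) - (if e ∈ S i then 1 else 0) :=
        aux_load_update w hw S i t e
      have h0 : 0 ≤ load w S e := aux_load_nonneg w hw S e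
      by_cases hsi : e ∈ S i
      · have h1 : 1 ≤ load w S e := aux_load_one_le w hw S hsi
        by_cases hti : e ∈ t
        · simp only [hsi, hti, if_true, hgdef, hlu] at *
          nlinarith [mul_nonneg hε0 (mul_nonneg (hα e) h0), mul_nonneg hε0 (hβ e)]
        · simp only [hsi, hti, if_true, if_false, hgdef, hlu] at *
          nlinarith [mul_nonneg (mul_nonneg hε0 (hα e)) (by linarith : 0 ≤ load w S e - 1)]
      · by_cases hti : e ∈ t
        · simp only [hsi, hti, if_true, if_false, hgdef, hlu] at *
          nlinarith [mul_nonneg hε0 (hα e), mul_nonneg hε0 (hβ e)]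
        · simp only [hsi, hti, if_false, hgdef, hlu] at *
          ring_nf
          norm_num
    have hsplit : ∑ e, ((if e ∈ S i then α e * load w S e + β e else 0)
        - (1 + ε) * (if e ∈ t then α e * load w S' e + β e else 0)
        + (g e (load w S' e) - g e (load w S e)))
        = cost w ℓ S i - (1 + ε) * cost w ℓ S' i + (Ψ S' - Ψ S) := by
      rw [hcost1, hcost2, hS'i, hΨdef]
      rw [Finset.sum_add_distrib, Finset.sum_sub_distrib, Finset.sum_sub_distrib,
        Finset.mul_sum]
    rw [hsplit] at key
    linarith
  · -- the social cost bound
    intro O hOfeas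
    have hρsocial := aux_social w hw α β ℓ hℓ S
    have hρsocialO := aux_social w hw α β ℓ hℓ O
    have hF1 : Ψ S ≤ Ψ O := hSmin O hOfeas
    -- the deviation inequality, summed over players
    set up : E → ℝ := fun e => α e * ((1 + ε) * load w S e + 1) + β e with hupdef
    set dn : E → ℝ := fun e => α e * ((1 + ε) * load w S e - ε) + β e with hdndef
    have hF2 : 0 ≤ ∑ e, (load w O e * up e - load w S e * dn e) := by
      have hplayer : ∀ i : Fin n,
          (0 : ℝ) ≤ ∑ e, ((if e ∈ O i then up e else 0) - (if e ∈ S i then dn e else 0)) := by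
        intro i
        have hmin : Ψ S ≤ Ψ (Function.update S i (O i)) := hSmin _ (hupd i (O i) (hOfeas i))
        have hstep : Ψ (Function.update S i (O i)) - Ψ S
            ≤ ∑ e, ((if e ∈ O i then up e else 0) - (if e ∈ S i then dn e else 0)) := by
          have hΨdiff : Ψ (Function.update S i (O i)) - Ψ S
              = ∑ e, (g e (load w (Function.update S i (O i)) e) - g e (load w S e)) := by
            rw [hΨdef, Finset.sum_sub_distrib]
          rw [hΨdiff]
          apply Finset.sum_le_sum
          intro e _
          have hlu : load w (Function.update S i (O i)) e
              = load w S e + (if e ∈ O i then 1 else 0) - (if e ∈ S i then 1 else 0) :=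
            aux_load_update w hw S i (O i) e
          have h0 : 0 ≤ load w S e := aux_load_nonneg w hw S e
          by_cases hoi : e ∈ O i <;> by_cases hsi : e ∈ S i <;>
            simp only [hoi, hsi, if_true, if_false, hlu, hgdef, hupdef, hdndef] <;>
            nlinarith [mul_nonneg hε0 (hα e), hα e]
        linarith
      have hsum : (0 : ℝ) ≤ ∑ i, ∑ e,
          ((if e ∈ O i then up e else 0) - (if e ∈ S i then dn e else 0)) :=
        Finset.sum_nonneg fun i _ => hplayer i
      rw [Finset.sum_comm] at hsum
      calc (0 : ℝ) ≤ _ := hsum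
        _ = ∑ e, (load w O e * up e - load w S e * dn e) := by
          refine Finset.sum_congr rfl fun e _ => ?_
          rw [Finset.sum_sub_distrib, aux_count w hw O e (up e), aux_count w hw S e (dn e)]
    -- multipliers
    set ρ : ℝ := (1 + s) / (ε + s) with hρdef
    set ν : ℝ := (ρ - 1) / (1 + ε) with hνdef
    set μ : ℝ := 1 + ε * ν with hμdef
    have hsl : (11 : ℝ) / 8 ≤ s := by nlinarith
    have hden : (0 : ℝ) < ε + s := by linarith
    have h1ε : (0 : ℝ) < 1 + ε := by linarith
    have hρ1 : (1 : ℝ) ≤ ρ := by rw [hρdef, le_div_iff₀ hden]; linarith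
    have hν0 : 0 ≤ ν := by
      rw [hνdef]; apply div_nonneg (by linarith) (by linarith)
    have hμ0 : 0 ≤ μ := by rw [hμdef]; nlinarith
    -- assemble
    rw [hρsocial, hρsocialO]
    have hchain : ∑ e, load w S e * (α e * load w S e + β e)
        ≤ ∑ e, (load w S e * (α e * load w S e + β e)
            + μ * (g e (load w O e) - g e (load w S e))
            + ν * (load w O e * up e - load w S e * dn e)) := by
      rw [Finset.sum_add_distrib, Finset.sum_add_distrib, ← Finset.mul_sum, ← Finset.mul_sum,
        Finset.sum_sub_distrib]
      have hμterm : 0 ≤ μ * ((∑ e, g e (load w O e)) - ∑ e, g e (load w S e)) := by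
        apply mul_nonneg hμ0
        have : Ψ S = ∑ e, g e (load w S e) := rfl
        have : Ψ O = ∑ e, g e (load w O e) := rfl
        simp only [hΨdef] at hF1
        linarith
      have hνterm : 0 ≤ ν * ∑ e, (load w O e * up e - load w S e * dn e) :=
        mul_nonneg hν0 hF2
      linarith
    refine le_trans hchain ?_
    rw [Finset.mul_sum]
    apply Finset.sum_le_sum
    intro e _
    obtain ⟨ln, hln⟩ : ∃ m : ℕ, load w S e = (m : ℝ) :=
      ⟨_, aux_load_nat w hw S e⟩
    obtain ⟨om, hom⟩ : ∃ m : ℕ, load w O e = (m : ℝ) :=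
      ⟨_, aux_load_nat w hw O e⟩
    have := aux_key ε s hε0 hε1 hs hs0 (α e) (β e) (hα e) (hβ e) ln om
    simp only [hgdef, hupdef, hdndef, hρdef, hνdef, hμdef, hln, hom]
    convert this using 2
end

section
/- For every unweighted congestion game with quadratic latency functions ℓ_e(x) = α_e x² (α_e ≥ 0), there exists a pure Nash equilibrium S such that SUM(S) ≤ 2.362·SUM(O) for every strategy profile O. In particular, the price of stability of any such game is at most 2.362. -/
open Finset

open CG

set_option linter.unusedSectionVars false

namespace PoSAux

variable {n : ℕ} {E : Type*} [Fintype E] [DecidableEq E]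

/-- Rosenthal summand for quadratic latencies. -/
noncomputable def gpot (x : ℝ) : ℝ := (2*x^3 + 3*x^2 + x)/6

/-- Rosenthal potential. -/
noncomputable def pot (w : Fin n → ℝ) (α : E → ℝ) (S : Fin n → Finset E) : ℝ :=
  ∑ e, α e * gpot (load w S e)

lemma load_eq_sum (w : Fin n → ℝ) (S : Fin n → Finset E) (e : E) :
    load w S e = ∑ j, (if e ∈ S j then w j else 0) := by
  rw [load, Finset.sum_filter]

/-- The part of the load not due to player `i`. -/
noncomputable def rest (w : Fin n → ℝ) (S : Fin n → Finset E) (i : Fin n) (e : E) : ℝ :=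
  ∑ j ∈ univ.erase i, (if e ∈ S j then w j else 0)

lemma load_decomp (w : Fin n → ℝ) (S : Fin n → Finset E) (i : Fin n) (e : E) :
    load w S e = (if e ∈ S i then w i else 0) + rest w S i e := by
  rw [load_eq_sum, ← Finset.sum_erase_add univ _ (mem_univ i), rest, add_comm]

lemma rest_update (w : Fin n → ℝ) (S : Fin n → Finset E) (i : Fin n) (t : Finset E) (e : E) :
    rest w (Function.update S i t) i e = rest w S i e := by
  refine Finset.sum_congr rfl fun j hj => ?_
  rw [Function.update_of_ne (Finset.ne_of_mem_erase hj)]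

lemma rest_nonneg (w : Fin n → ℝ) (hw : ∀ i, 0 ≤ w i) (S : Fin n → Finset E) (i : Fin n) (e : E) :
    0 ≤ rest w S i e := by
  refine Finset.sum_nonneg fun j _ => ?_
  split <;> simp [hw j]

lemma load_nonneg (w : Fin n → ℝ) (hw : ∀ i, 0 ≤ w i) (S : Fin n → Finset E) (e : E) :
    0 ≤ load w S e :=
  Finset.sum_nonneg fun j _ => hw j

lemma load_nat (w : Fin n → ℝ) (hw : ∀ i, w i = 1) (S : Fin n → Finset E) (e : E) :
    ∃ k : ℕ, load w S e = k := by
  refine ⟨(univ.filter fun i => e ∈ S i).card, ?_⟩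
  rw [load]
  simp [hw]

/-- cost of player `i` as a sum over all resources. -/
lemma cost_eq_sum (w : Fin n → ℝ) (α : E → ℝ) (ℓ : E → ℝ → ℝ)
    (hℓ : ∀ e x, ℓ e x = α e * x ^ 2) (S : Fin n → Finset E) (i : Fin n) :
    cost w ℓ S i = ∑ e, (if e ∈ S i then α e * (load w S e) ^ 2 else 0) := by
  rw [cost, Finset.sum_ite_mem, Finset.univ_inter]
  exact Finset.sum_congr rfl fun e _ => hℓ e _

/-- Exact potential property. -/
lemma pot_update (w : Fin n → ℝ) (hw : ∀ i, w i = 1) (α : E → ℝ) (ℓ : E → ℝ → ℝ)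
    (hℓ : ∀ e x, ℓ e x = α e * x ^ 2) (S : Fin n → Finset E) (i : Fin n) (t : Finset E) :
    pot w α (Function.update S i t) - pot w α S
      = cost w ℓ (Function.update S i t) i - cost w ℓ S i := by
  have hupdi : Function.update S i t i = t := Function.update_self i t S
  rw [cost_eq_sum w α ℓ hℓ, cost_eq_sum w α ℓ hℓ, hupdi, pot, pot,
    ← Finset.sum_sub_distrib, ← Finset.sum_sub_distrib]
  refine Finset.sum_congr rfl fun e _ => ?_
  have h1 : load w (Function.update S i t) e
      = (if e ∈ t then 1 else 0) + rest w S i e := by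
    rw [load_decomp w _ i e, rest_update, hupdi, hw]
  have h2 : load w S e = (if e ∈ S i then 1 else 0) + rest w S i e := by
    rw [load_decomp w S i e, hw]
  rw [h1, h2]
  by_cases ht : e ∈ t <;> by_cases hs : e ∈ S i <;> simp [ht, hs, gpot] <;> ring

/-- social cost as a sum over resources. -/
lemma social_eq (w : Fin n → ℝ) (hw : ∀ i, w i = 1) (α : E → ℝ) (ℓ : E → ℝ → ℝ)
    (hℓ : ∀ e x, ℓ e x = α e * x ^ 2) (S : Fin n → Finset E) :
    social w ℓ S = ∑ e, α e * (load w S e) ^ 3 := by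
  rw [social]
  have : ∀ i, cost w ℓ S i = ∑ e, (if e ∈ S i then (1:ℝ) else 0) * (α e * (load w S e) ^ 2) := by
    intro i
    rw [cost_eq_sum w α ℓ hℓ]
    refine Finset.sum_congr rfl fun e _ => ?_
    split <;> simp
  simp_rw [this]
  rw [Finset.sum_comm]
  refine Finset.sum_congr rfl fun e _ => ?_
  rw [← Finset.sum_mul]
  have : ∑ i, (if e ∈ S i then (1:ℝ) else 0) = load w S e := by
    rw [load_eq_sum]
    exact Finset.sum_congr rfl fun j _ => by rw [hw]
  rw [this]; ring

/-- The pointwise inequality behind ρ = 2.362. -/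
lemma pointwise (L O : ℝ) (hL0 : 0 ≤ L) (hL : L = 0 ∨ 1 ≤ L) (hO : O = 0 ∨ 1 ≤ O) :
    L^3 + (227/500)*(O*(L+1)^2 - L^3) + (477/250)*(gpot O - gpot L)
      ≤ (1181/500) * O^3 := by
  rcases hO with hO | hO
  · subst hO
    rw [gpot, gpot]
    nlinarith [pow_nonneg hL0 3, sq_nonneg L]
  · rcases hL with hL | hL
    · subst hL
      rw [gpot, gpot]
      nlinarith [mul_nonneg (mul_nonneg (by linarith : (0:ℝ) ≤ O-1)
        (by linarith : (0:ℝ) ≤ O-1)) (by linarith : (0:ℝ) ≤ O), sq_nonneg (O-1)]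
    · rw [gpot, gpot]
      nlinarith [mul_nonneg (sq_nonneg (O - (593/2000)*L))
          (by linarith : (0:ℝ) ≤ O + 2*(593/2000)*L),
        mul_nonneg (mul_nonneg (by linarith : (0:ℝ) ≤ L - 1)
          (by linarith : (0:ℝ) ≤ O - 1)) (by linarith : (0:ℝ) ≤ L),
        mul_nonneg (mul_nonneg (by linarith : (0:ℝ) ≤ L - 1)
          (by linarith : (0:ℝ) ≤ O - 1)) (by linarith : (0:ℝ) ≤ O),
        sq_nonneg (L - O), sq_nonneg (L-1), sq_nonneg (O-1),
        mul_nonneg (sq_nonneg (L-1)) (by linarith : (0:ℝ) ≤ O),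
        mul_nonneg (sq_nonneg (O-1)) (by linarith : (0:ℝ) ≤ O)]

end PoSAux

open PoSAux

theorem pos_unweighted_quadratic
    (n : ℕ) (E : Type*) [Fintype E] [DecidableEq E]
    (w : Fin n → ℝ) (hw : ∀ i, w i = 1)
    (Strat : Fin n → Set (Finset E)) (hStrat : ∀ i, (Strat i).Nonempty)
    (α : E → ℝ) (hα : ∀ e, 0 ≤ α e)
    (ℓ : E → ℝ → ℝ) (hℓ : ∀ e x, ℓ e x = α e * x ^ 2) :
    ∃ S : Fin n → Finset E, (∀ i, S i ∈ Strat i) ∧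
      (∀ i, ∀ t ∈ Strat i, cost w ℓ S i ≤ cost w ℓ (Function.update S i t) i) ∧
      ∀ O : Fin n → Finset E, (∀ i, O i ∈ Strat i) →
        social w ℓ S ≤ 2.362 * social w ℓ O := by
  classical
  have hw0 : ∀ i, 0 ≤ w i := fun i => by rw [hw i]; norm_num
  -- feasible set
  set A : Set (Fin n → Finset E) := {S | ∀ i, S i ∈ Strat i} with hA
  have hAne : A.Nonempty := ⟨fun i => (hStrat i).some, fun i => (hStrat i).some_mem⟩
  obtain ⟨S, hSA, hSmin⟩ := Set.exists_min_image A (pot w α) (Set.toFinite A) hAne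
  refine ⟨S, hSA, ?_, ?_⟩
  case refine_1 =>
    intro i t ht
    have hmem : Function.update S i t ∈ A := by
      intro j
      rcases eq_or_ne j i with rfl | hj
      · rw [Function.update_self]; exact ht
      · rw [Function.update_of_ne hj]; exact hSA j
    have := hSmin _ hmem
    have hpot := pot_update w hw α ℓ hℓ S i t
    linarith
  case refine_2 =>
    intro O hO
    -- Nash inequality per player
    have hNashP : ∀ i, cost w ℓ S i ≤ ∑ e, (if e ∈ O i then (1:ℝ) else 0) * (α e * (load w S e + 1) ^ 2) := by
      intro i
      have hmem : Function.update S i (O i) ∈ A := by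
        intro j
        rcases eq_or_ne j i with rfl | hj
        · rw [Function.update_self]; exact hO j
        · rw [Function.update_of_ne hj]; exact hSA j
      have h1 : cost w ℓ S i ≤ cost w ℓ (Function.update S i (O i)) i := by
        have := hSmin _ hmem
        have hpot := pot_update w hw α ℓ hℓ S i (O i)
        linarith
      refine h1.trans ?_
      rw [cost_eq_sum w α ℓ hℓ, Function.update_self]
      refine Finset.sum_le_sum fun e _ => ?_
      by_cases he : e ∈ O i
      · simp only [he, if_true, one_mul]
        refine mul_le_mul_of_nonneg_left ?_ (hα e)
        have hle : load w (Function.update S i (O i)) e ≤ load w S e + 1 := by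
          rw [load_decomp w _ i e, rest_update, load_decomp w S i e, Function.update_self, hw]
          have := rest_nonneg w hw0 S i e
          split <;> split <;> simp <;> linarith
        have h0 : 0 ≤ load w (Function.update S i (O i)) e := load_nonneg w hw0 _ e
        exact pow_le_pow_left₀ h0 hle 2
      · simp [he]
    -- summed Nash inequality
    have hNash : social w ℓ S ≤ ∑ e, α e * (load w O e * (load w S e + 1) ^ 2) := by
      rw [social]
      calc ∑ i, cost w ℓ S i
          ≤ ∑ i, ∑ e, (if e ∈ O i then (1:ℝ) else 0) * (α e * (load w S e + 1) ^ 2) :=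
            Finset.sum_le_sum fun i _ => hNashP i
        _ = ∑ e, α e * (load w O e * (load w S e + 1) ^ 2) := by
            rw [Finset.sum_comm]
            refine Finset.sum_congr rfl fun e _ => ?_
            rw [← Finset.sum_mul]
            have : ∑ i, (if e ∈ O i then (1:ℝ) else 0) = load w O e := by
              rw [load_eq_sum]
              exact Finset.sum_congr rfl fun j _ => by rw [hw]
            rw [this]; ring
    -- potential inequality
    have hpot : pot w α S ≤ pot w α O := hSmin O hO
    -- main summed inequality
    have hmain : (∑ e, α e * (load w S e) ^ 3)
        + (227/500) * ((∑ e, α e * (load w O e * (load w S e + 1) ^ 2)) - ∑ e, α e * (load w S e) ^ 3)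
        + (477/250) * (pot w α O - pot w α S)
        ≤ (1181/500) * ∑ e, α e * (load w O e) ^ 3 := by
      rw [pot, pot, ← Finset.sum_sub_distrib, ← Finset.sum_sub_distrib, Finset.mul_sum,
        Finset.mul_sum, ← Finset.sum_add_distrib, ← Finset.sum_add_distrib, Finset.mul_sum]
      refine Finset.sum_le_sum fun e _ => ?_
      obtain ⟨kL, hkL⟩ := load_nat w hw S e
      obtain ⟨kO, hkO⟩ := load_nat w hw O e
      have hL0 : 0 ≤ load w S e := load_nonneg w hw0 S e
      have hL : load w S e = 0 ∨ 1 ≤ load w S e := by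
        rcases Nat.eq_zero_or_pos kL with h | h
        · left; rw [hkL, h]; norm_num
        · right; rw [hkL]; exact_mod_cast h
      have hO1 : load w O e = 0 ∨ 1 ≤ load w O e := by
        rcases Nat.eq_zero_or_pos kO with h | h
        · left; rw [hkO, h]; norm_num
        · right; rw [hkO]; exact_mod_cast h
      have hp := pointwise (load w S e) (load w O e) hL0 hL hO1
      have := mul_le_mul_of_nonneg_left hp (hα e)
      calc α e * (load w S e) ^ 3
            + (227/500) * (α e * (load w O e * (load w S e + 1) ^ 2) - α e * (load w S e) ^ 3)
            + (477/250) * (α e * gpot (load w O e) - α e * gpot (load w S e))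
          = α e * ((load w S e)^3 + (227/500)*(load w O e * (load w S e + 1)^2 - (load w S e)^3)
              + (477/250)*(gpot (load w O e) - gpot (load w S e))) := by ring
        _ ≤ α e * ((1181/500) * (load w O e)^3) := this
        _ = (1181/500) * (α e * (load w O e) ^ 3) := by ring
    have hS3 : social w ℓ S = ∑ e, α e * (load w S e) ^ 3 := social_eq w hw α ℓ hℓ S
    have hO3 : social w ℓ O = ∑ e, α e * (load w O e) ^ 3 := social_eq w hw α ℓ hℓ O
    have h2362 : (2.362 : ℝ) = 1181/500 := by norm_num
    rw [h2362, hO3]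
    rw [hS3] at hNash ⊢
    linarith
end

section
/- For every unweighted congestion game with cubic latency functions ℓ_e(x) = α_e x³ (α_e ≥ 0), there exists a pure Nash equilibrium S such that SUM(S) ≤ 3.322·SUM(O) for every strategy profile O. In particular, the price of stability of any such game is at most 3.322. -/
open Finset

open CG

/-!
Minimise Rosenthal's potential `Φ(S) = ∑ₑ αₑ nₑ²(nₑ + 1)²/4` over all profiles. A unilateral
deviation changes `Φ` by exactly the deviator's change of cost, so a minimiser `S` is a pure Nash
equilibrium, and `Φ(S) ≤ Φ(O)` for every profile `O`. Summing the equilibrium conditions of the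
players against their strategies in `O` gives `SUM(S) ≤ ∑ₑ αₑ oₑ (sₑ + 1)³`. A pointwise inequality
in the loads `sₑ, oₑ ∈ ℕ` combines `0.6683 · SUM(S)`, `0.3317 ·` this Nash bound and
`2.99 · (Φ(O) - Φ(S))` into `SUM(S) ≤ 3.322 · SUM(O)`.
-/

open Function

theorem sum_range_succ_pow_three (m : ℕ) :
    ∑ k ∈ range m, ((k : ℝ) + 1) ^ 3 = (m : ℝ) ^ 2 * (m + 1) ^ 2 / 4 := by
  induction m with
  | zero => simp
  | succ m ih => rw [sum_range_succ, ih]; push_cast; ring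

namespace CG

variable {n : ℕ} {E : Type*} [DecidableEq E]

def numUsers (S : Fin n → Finset E) (e : E) : ℕ := #{i | e ∈ S i}

def numOthers (S : Fin n → Finset E) (i : Fin n) (e : E) : ℕ := #{j ∈ univ.erase i | e ∈ S j}

theorem load_one (S : Fin n → Finset E) (e : E) : load 1 S e = numUsers S e := by
  simp [load, numUsers]

theorem numUsers_eq_numOthers_add (S : Fin n → Finset E) (i : Fin n) (e : E) :
    numUsers S e = numOthers S i e + if e ∈ S i then 1 else 0 := by
  rw [numUsers, numOthers, card_filter, card_filter, add_comm,
    add_sum_erase _ (fun j => if e ∈ S j then 1 else 0) (mem_univ i)]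

theorem numOthers_update (S : Fin n → Finset E) (i : Fin n) (t : Finset E) (e : E) :
    numOthers (update S i t) i e = numOthers S i e := by
  refine congrArg card (filter_congr fun j hj => ?_)
  rw [update_of_ne (ne_of_mem_erase hj)]

theorem numUsers_update_le (S : Fin n → Finset E) (i : Fin n) (t : Finset E) (e : E) :
    numUsers (update S i t) e ≤ numUsers S e + 1 := by
  rw [numUsers_eq_numOthers_add _ i, numOthers_update, numUsers_eq_numOthers_add S i]
  split_ifs <;> omega

theorem cost_update_le {ℓ : E → ℝ → ℝ} (hℓ : ∀ e, Monotone (ℓ e)) (S : Fin n → Finset E)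
    (i : Fin n) (t : Finset E) :
    cost 1 ℓ (update S i t) i ≤ ∑ e ∈ t, ℓ e (numUsers S e + 1) := by
  rw [cost, update_self]
  refine sum_le_sum fun e _ => hℓ e ?_
  rw [load_one]
  exact_mod_cast numUsers_update_le S i t e

variable [Fintype E]

noncomputable def rosenthal (ℓ : E → ℝ → ℝ) (S : Fin n → Finset E) : ℝ :=
  ∑ e, ∑ k ∈ range (numUsers S e), ℓ e (k + 1)

theorem rosenthal_eq_add_cost (ℓ : E → ℝ → ℝ) (S : Fin n → Finset E) (i : Fin n) :
    rosenthal ℓ S = ∑ e, ∑ k ∈ range (numOthers S i e), ℓ e (k + 1) + cost 1 ℓ S i := by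
  rw [rosenthal, cost, ← univ_inter (S i), ← sum_ite_mem, ← sum_add_distrib]
  refine sum_congr rfl fun e _ => ?_
  rw [load_one, numUsers_eq_numOthers_add S i]
  split_ifs <;> simp [sum_range_succ]

theorem rosenthal_update_sub (ℓ : E → ℝ → ℝ) (S : Fin n → Finset E) (i : Fin n) (t : Finset E) :
    rosenthal ℓ (update S i t) - rosenthal ℓ S = cost 1 ℓ (update S i t) i - cost 1 ℓ S i := by
  rw [rosenthal_eq_add_cost _ _ i, rosenthal_eq_add_cost ℓ S i]
  simp only [numOthers_update]
  ring

theorem cost_le_cost_update_of_isMinOn {ℓ : E → ℝ → ℝ} {Strat : Fin n → Set (Finset E)}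
    {S : Fin n → Finset E} (hmin : IsMinOn (rosenthal ℓ) (Set.univ.pi Strat) S)
    (hS : S ∈ Set.univ.pi Strat) {i : Fin n} {t : Finset E} (ht : t ∈ Strat i) :
    cost 1 ℓ S i ≤ cost 1 ℓ (update S i t) i := by
  have hT : update S i t ∈ Set.univ.pi Strat :=
    Set.update_mem_pi_iff.2 ⟨fun j hj => hS j trivial, fun _ => ht⟩
  linarith [rosenthal_update_sub ℓ S i t, isMinOn_iff.1 hmin _ hT]

theorem sum_sum_mem_eq_sum_numUsers_mul (O : Fin n → Finset E) (f : E → ℝ) :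
    ∑ i, ∑ e ∈ O i, f e = ∑ e, numUsers O e * f e := by
  rw [sum_comm' (t' := univ) (s' := fun e => {i | e ∈ O i}) (by simp)]
  simp [numUsers]

theorem social_one_eq (ℓ : E → ℝ → ℝ) (S : Fin n → Finset E) :
    social 1 ℓ S = ∑ e, numUsers S e * ℓ e (numUsers S e) := by
  simp only [social, cost, sum_sum_mem_eq_sum_numUsers_mul, load_one]

theorem social_le_of_nash {ℓ : E → ℝ → ℝ} (hℓ : ∀ e, Monotone (ℓ e)) {S O : Fin n → Finset E}
    (hnash : ∀ i, cost 1 ℓ S i ≤ cost 1 ℓ (update S i (O i)) i) :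
    social 1 ℓ S ≤ ∑ e, numUsers O e * ℓ e (numUsers S e + 1) :=
  calc social 1 ℓ S ≤ ∑ i, ∑ e ∈ O i, ℓ e (numUsers S e + 1) :=
        sum_le_sum fun i _ => (hnash i).trans (cost_update_le hℓ S i (O i))
    _ = _ := sum_sum_mem_eq_sum_numUsers_mul O _

theorem rosenthal_cubic (α : E → ℝ) (S : Fin n → Finset E) :
    rosenthal (fun e x => α e * x ^ 3) S
      = ∑ e, α e * ((numUsers S e : ℝ) ^ 2 * (numUsers S e + 1) ^ 2 / 4) := by
  simp only [rosenthal, ← mul_sum, sum_range_succ_pow_three]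

theorem social_one_cubic (α : E → ℝ) (S : Fin n → Finset E) :
    social 1 (fun e x => α e * x ^ 3) S = ∑ e, α e * (numUsers S e : ℝ) ^ 4 := by
  rw [social_one_eq]
  exact sum_congr rfl fun e _ => by ring

end CG

theorem Nat.cast_eq_zero_or_one_le {R : Type*} [AddMonoidWithOne R] [PartialOrder R]
    [AddLeftMono R] [ZeroLEOneClass R] [CharZero R] (m : ℕ) : (m : R) = 0 ∨ 1 ≤ (m : R) := by
  rcases m.eq_zero_or_pos with rfl | hm
  · exact Or.inl Nat.cast_zero
  · exact Or.inr (Nat.one_le_cast.2 hm)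

/-- The bound has slack only `10⁻⁴` at `x = y = 1`. -/
theorem cubic_resource_ineq {x y : ℝ} (hx : x = 0 ∨ 1 ≤ x) (hy : y = 0 ∨ 1 ≤ y) :
    6683 / 10000 * x ^ 4 + 3317 / 10000 * (y * (x + 1) ^ 3) + 299 / 100 * (y ^ 2 * (y + 1) ^ 2 / 4)
      ≤ 3322 / 1000 * y ^ 4 + 299 / 100 * (x ^ 2 * (x + 1) ^ 2 / 4) := by
  rcases hx with rfl | hx
  · rcases hy with rfl | hy
    · norm_num
    obtain ⟨b, hb, rfl⟩ : ∃ b : ℝ, 0 ≤ b ∧ y = b + 1 := ⟨y - 1, by linarith, by ring⟩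
    nlinarith [pow_nonneg hb 2, pow_nonneg hb 3, pow_nonneg hb 4]
  obtain ⟨a, ha, rfl⟩ : ∃ a : ℝ, 0 ≤ a ∧ x = a + 1 := ⟨x - 1, by linarith, by ring⟩
  rcases hy with rfl | hy
  · nlinarith [pow_nonneg ha 2, pow_nonneg ha 3, pow_nonneg ha 4]
  obtain ⟨b, hb, rfl⟩ : ∃ b : ℝ, 0 ≤ b ∧ y = b + 1 := ⟨y - 1, by linarith, by ring⟩
  -- As a polynomial in `a, b`, RHS - LHS has negative coefficients only at `a b`, `a² b`, `a³ b`.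
  have hab : 159216 * a * b ≤ 148700 * a ^ 2 + 408580 * b ^ 2 := by
    nlinarith [sq_nonneg (a - 5354 / 10000 * b)]
  have ha2b : 79608 * a ^ 2 * b ≤ 59204 * a ^ 3 + 352120 * b ^ 3 := by
    nlinarith [mul_nonneg (sq_nonneg (a - b)) (by linarith : (0:ℝ) ≤ 2 * a + b),
      pow_nonneg ha 3, pow_nonneg hb 3]
  have ha3b : 13268 * a ^ 3 * b ≤ 3168 * a ^ 4 + 102980 * b ^ 4 := by
    nlinarith [sq_nonneg (a ^ 2 - 3317 / 1584 * a * b - 3371 / 1000 * b ^ 2),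
      sq_nonneg (a * b - 2994 / 1000 * b ^ 2), sq_nonneg b, sq_nonneg (a * b)]
  nlinarith [pow_nonneg ha 2, pow_nonneg hb 2, pow_nonneg ha 3, pow_nonneg hb 3, mul_nonneg ha hb]

theorem pos_unweighted_cubic
    (n : ℕ) (E : Type*) [Fintype E] [DecidableEq E]
    (w : Fin n → ℝ) (hw : ∀ i, w i = 1)
    (Strat : Fin n → Set (Finset E)) (hStrat : ∀ i, (Strat i).Nonempty)
    (α : E → ℝ) (hα : ∀ e, 0 ≤ α e)
    (ℓ : E → ℝ → ℝ) (hℓ : ∀ e x, ℓ e x = α e * x ^ 3) :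
    ∃ S : Fin n → Finset E, (∀ i, S i ∈ Strat i) ∧
      (∀ i, ∀ t ∈ Strat i, cost w ℓ S i ≤ cost w ℓ (Function.update S i t) i) ∧
      ∀ O : Fin n → Finset E, (∀ i, O i ∈ Strat i) →
        social w ℓ S ≤ 3.322 * social w ℓ O := by
  obtain rfl : w = 1 := funext hw
  obtain rfl : ℓ = fun e x => α e * x ^ 3 := funext fun e => funext (hℓ e)
  have hmono (e : E) : Monotone fun x : ℝ => α e * x ^ 3 :=
    (Odd.strictMono_pow (by decide)).monotone.const_mul (hα e)
  obtain ⟨S, hS, hmin⟩ := (Set.univ.pi Strat).exists_min_image (rosenthal _)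
    (Set.toFinite _) (Set.univ_pi_nonempty_iff.2 hStrat)
  have hnash (i : Fin n) (t : Finset E) (ht : t ∈ Strat i) :=
    cost_le_cost_update_of_isMinOn (isMinOn_iff.2 hmin) hS ht
  refine ⟨S, fun i => hS i trivial, hnash, fun O hO => ?_⟩
  have hN := social_le_of_nash hmono fun i => hnash i (O i) (hO i)
  have hP := hmin O fun i _ => hO i
  have hkey := sum_le_sum fun e (_ : e ∈ univ) => mul_le_mul_of_nonneg_left
    (cubic_resource_ineq (Nat.cast_eq_zero_or_one_le (numUsers S e))
      (Nat.cast_eq_zero_or_one_le (numUsers O e))) (hα e)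
  rw [rosenthal_cubic, rosenthal_cubic] at hP
  simp only [social_one_cubic] at hN ⊢
  simp only [mul_add, sum_add_distrib, mul_left_comm (α _), ← mul_sum] at hkey
  linarith
end

section
/- For every unweighted congestion game with quadratic latency functions ℓ_e(x) = α_e x² (α_e ≥ 0), the solution S achieved after any one-round walk starting from the empty strategy profile satisfies SUM(S) ≤ 37.5888·SUM(O) for every strategy profile O. In particular, Apx¹_∅ of any such game is at most 37.5888. -/
/-!
With unit weights, a resource that ends up with `a` users in the walk was paid
`α (1² + 2² + ⋯ + a²)` in total by those users at the moments they chose it. Each player's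
payment at its turn is at most what its strategy in `O` would have cost then, hence at most its
cost at the final loads plus one; summing over players, `∑ α (1² + ⋯ + a²) ≤ ∑ α b (a + 1)²`,
where `b` is the load in `O`. The inequality `a³ + λ b (a + 1)² ≤ 37.5888 b³ + λ (1² + ⋯ + a²)`
for naturals `a, b` with `λ = 5.2944`, weighted by `α` and summed, then gives the bound.
-/

open Finset

open CG

lemma Finset.sum_card_filter_lt {γ M : Type*} [LinearOrder γ] [AddCommMonoid M] (T : Finset γ)
    (f : ℕ → M) : ∑ i ∈ T, f #{j ∈ T | j < i} = ∑ k ∈ range #T, f k := by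
  induction T using Finset.induction_on_max with
  | empty => simp
  | insert a s hlt ih =>
    have has : a ∉ s := fun h => lt_irrefl a (hlt a h)
    have below_a : {j ∈ insert a s | j < a} = s := by
      rw [filter_insert, if_neg (lt_irrefl a), filter_true_of_mem hlt]
    have below_i : ∀ i ∈ s, {j ∈ insert a s | j < i} = {j ∈ s | j < i} := fun i hi => by
      rw [filter_insert, if_neg (not_lt.2 (hlt i hi).le)]
    rw [sum_insert has, card_insert_of_notMem has, sum_range_succ, below_a,
      sum_congr rfl fun i hi => by rw [below_i i hi], ih, add_comm]

lemma sum_range_succ_sq (m : ℕ) :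
    ∑ k ∈ range m, ((k : ℝ) + 1) ^ 2 = (m : ℝ) * (m + 1) * (2 * m + 1) / 6 := by
  induction m with
  | zero => simp
  | succ m ih => rw [sum_range_succ, ih]; push_cast; ring

namespace CG

variable {n : ℕ} {E : Type*} [DecidableEq E]

def users (S : Fin n → Finset E) (e : E) : Finset (Fin n) := {i | e ∈ S i}

lemma sum_sum_eq_sum_sum_users [Fintype E] {M : Type*} [AddCommMonoid M] (S : Fin n → Finset E)
    (g : Fin n → E → M) : ∑ i, ∑ e ∈ S i, g i e = ∑ e, ∑ i ∈ users S e, g i e :=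
  sum_comm' fun i e => by simp [users]

lemma load_of_unit {w : Fin n → ℝ} (hw : ∀ i, w i = 1) (S : Fin n → Finset E) (e : E) :
    load w S e = #(users S e) := by
  simp [load, users, hw]

lemma preLoad_of_unit {w : Fin n → ℝ} (hw : ∀ i, w i = 1) (S : Fin n → Finset E) (i : Fin n)
    (e : E) : preLoad w S i e = #{j ∈ users S e | j < i} := by
  simp [preLoad, users, hw, filter_filter, and_comm]

lemma preLoad_nonneg {w : Fin n → ℝ} (hw : ∀ i, 0 ≤ w i) (S : Fin n → Finset E) (i : Fin n)
    (e : E) : 0 ≤ preLoad w S i e :=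
  sum_nonneg fun j _ => hw j

lemma preLoad_le_load {w : Fin n → ℝ} (hw : ∀ i, 0 ≤ w i) (S : Fin n → Finset E) (i : Fin n)
    (e : E) : preLoad w S i e ≤ load w S e :=
  sum_le_sum_of_subset_of_nonneg (fun j => by simp +contextual) fun j _ _ => hw j

lemma social_of_unit [Fintype E] {w : Fin n → ℝ} (hw : ∀ i, w i = 1) (ℓ : E → ℝ → ℝ)
    (S : Fin n → Finset E) : social w ℓ S = ∑ e, #(users S e) * ℓ e #(users S e) := by
  simp only [social, cost, load_of_unit hw, sum_sum_eq_sum_sum_users S, sum_const, nsmul_eq_mul]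

lemma sum_walkCost_of_unit [Fintype E] {w : Fin n → ℝ} (hw : ∀ i, w i = 1) (ℓ : E → ℝ → ℝ)
    (S : Fin n → Finset E) :
    ∑ i, ∑ e ∈ S i, ℓ e (preLoad w S i e + w i)
      = ∑ e, ∑ k ∈ range #(users S e), ℓ e (k + 1) := by
  rw [sum_sum_eq_sum_sum_users]
  refine sum_congr rfl fun e _ => ?_
  simp only [preLoad_of_unit hw, hw]
  exact sum_card_filter_lt (users S e) fun k => ℓ e (k + 1)

theorem sum_walkCost_le_of_bestResponse [Fintype E] {w : Fin n → ℝ} (hw : ∀ i, w i = 1)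
    {ℓ : E → ℝ → ℝ} (hℓ : ∀ e, MonotoneOn (ℓ e) (Set.Ici 0)) {S O : Fin n → Finset E}
    (hbest : ∀ i, ∑ e ∈ S i, ℓ e (preLoad w S i e + w i)
      ≤ ∑ e ∈ O i, ℓ e (preLoad w S i e + w i)) :
    ∑ e, ∑ k ∈ range #(users S e), ℓ e (k + 1)
      ≤ ∑ e, #(users O e) * ℓ e (#(users S e) + 1) := by
  have hw₀ : ∀ i, 0 ≤ w i := fun i => (hw i).symm ▸ zero_le_one
  rw [← sum_walkCost_of_unit hw]
  calc ∑ i, ∑ e ∈ S i, ℓ e (preLoad w S i e + w i)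
      ≤ ∑ i, ∑ e ∈ O i, ℓ e (preLoad w S i e + w i) := sum_le_sum fun i _ => hbest i
    _ ≤ ∑ i, ∑ e ∈ O i, ℓ e (load w S e + 1) := by
      refine sum_le_sum fun i _ => sum_le_sum fun e _ => ?_
      have hpre := preLoad_nonneg hw₀ S i e
      have hle := preLoad_le_load hw₀ S i e
      rw [hw]
      exact hℓ e (Set.mem_Ici.2 (by linarith)) (Set.mem_Ici.2 (by linarith)) (by linarith)
    _ = ∑ e, #(users O e) * ℓ e (#(users S e) + 1) := by
      simp only [load_of_unit hw, sum_sum_eq_sum_sum_users O, sum_const, nsmul_eq_mul]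

end CG

lemma cube_add_mul_succ_sq_le (a b : ℕ) :
    (a : ℝ) ^ 3 + 5.2944 * b * (a + 1) ^ 2
      ≤ 37.5888 * b ^ 3 + 5.2944 * (a * (a + 1) * (2 * a + 1) / 6) := by
  rcases Nat.lt_or_ge a 5 with ha | ha
  -- `b` must be an integer here: at `a = 4`, `b = 1` the two sides differ by less than `0.1`
  · interval_cases a <;> rcases b with _ | _ | m
    all_goals first
      | norm_num; done
      | push_cast; nlinarith [sq_nonneg (m : ℝ), pow_nonneg (Nat.cast_nonneg (α := ℝ) m) 3]
  · have ha' : (5 : ℝ) ≤ a := by exact_mod_cast ha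
    have hb : (0 : ℝ) ≤ b := b.cast_nonneg
    -- the scale `4.61507` makes the `b³` term of AM-GM land just below `37.5888 b³`
    have amgm : 3 * ((a : ℝ) + 1) ^ 2 * (4.61507 * b) ≤ 2 * (a + 1) ^ 3 + (4.61507 * b) ^ 3 := by
      nlinarith [mul_nonneg (sq_nonneg ((a : ℝ) + 1 - 4.61507 * b))
        (by linarith : (0 : ℝ) ≤ 2 * (a + 1) + 4.61507 * b)]
    nlinarith [sq_nonneg ((a : ℝ) - 5), pow_nonneg hb 3]

theorem oneround_unweighted_quadratic_general
    (n : ℕ) (E : Type*) [Fintype E] [DecidableEq E]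
    (w : Fin n → ℝ) (hw : ∀ i, w i = 1)
    (Strat : Fin n → Set (Finset E))
    (α : E → ℝ) (hα : ∀ e, 0 ≤ α e)
    (ℓ : E → ℝ → ℝ) (hℓ : ∀ e x, ℓ e x = α e * x ^ 2)
    (S : Fin n → Finset E)
    (hWalk : ∀ i, S i ∈ Strat i ∧ ∀ t ∈ Strat i,
      ∑ e ∈ S i, ℓ e (preLoad w S i e + w i) ≤ ∑ e ∈ t, ℓ e (preLoad w S i e + w i))
    (O : Fin n → Finset E) (hO : ∀ i, O i ∈ Strat i) :
    social w ℓ S ≤ 37.5888 * social w ℓ O := by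
  have hmono : ∀ e, MonotoneOn (ℓ e) (Set.Ici 0) := fun e x hx y _ hxy => by
    rw [hℓ, hℓ]
    exact mul_le_mul_of_nonneg_left (pow_le_pow_left₀ hx hxy 2) (hα e)
  have hwalk := sum_walkCost_le_of_bestResponse hw hmono fun i => (hWalk i).2 (O i) (hO i)
  have per_resource : ∀ e ∈ (univ : Finset E),
      (#(users S e) : ℝ) * ℓ e #(users S e) + 5.2944 * (#(users O e) * ℓ e (#(users S e) + 1))
        ≤ 37.5888 * (#(users O e) * ℓ e #(users O e))
          + 5.2944 * ∑ k ∈ range #(users S e), ℓ e (k + 1) := fun e _ => by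
    simp only [hℓ, ← mul_sum, sum_range_succ_sq]
    linear_combination mul_le_mul_of_nonneg_left
      (cube_add_mul_succ_sq_le #(users S e) #(users O e)) (hα e)
  have hsum := sum_le_sum per_resource
  simp only [sum_add_distrib, ← mul_sum] at hsum
  rw [social_of_unit hw, social_of_unit hw]
  linarith

theorem oneround_unweighted_quadratic
    (n : ℕ) (E : Type*) [Fintype E] [DecidableEq E]
    (w : Fin n → ℝ) (hw : ∀ i, w i = 1)
    (Strat : Fin n → Set (Finset E)) (hStrat : ∀ i, (Strat i).Nonempty)
    (α : E → ℝ) (hα : ∀ e, 0 ≤ α e)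
    (ℓ : E → ℝ → ℝ) (hℓ : ∀ e x, ℓ e x = α e * x ^ 2)
    (S : Fin n → Finset E)
    (hWalk : ∀ i, S i ∈ Strat i ∧ ∀ t ∈ Strat i,
      ∑ e ∈ S i, ℓ e (preLoad w S i e + w i) ≤ ∑ e ∈ t, ℓ e (preLoad w S i e + w i))
    (O : Fin n → Finset E) (hO : ∀ i, O i ∈ Strat i) :
    social w ℓ S ≤ 37.5888 * social w ℓ O :=
  oneround_unweighted_quadratic_general n E w hw Strat α hα ℓ hℓ S hWalk O hO
end

section
/- Let ε ≥ 0 and let G be a weighted congestion game with linear latency functions ℓ_e(x) = α_e x (α_e ≥ 0). Define the ε-approximate potential Φ_ε(S) = (1/2)·Σ_{e ∈ E} α_e·L_e(S)² + (1/2)·((1−ε)/(1+ε))·Σ_{e ∈ E} Σ_{i : e ∈ s_i} α_e·w_i². If a strategy profile S is a local minimum of Φ_ε, i.e., Φ_ε(S) ≤ Φ_ε(S_{-i} ⋄ t) for every player i and every t ∈ Σ_i, then S is an ε-approximate pure Nash equilibrium of G. -/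
open Finset

open CG

lemma filter_update_sum {n : ℕ} {E : Type*} [Fintype E] [DecidableEq E]
    (S : Fin n → Finset E) (i : Fin n) (t : Finset E) (e : E) (g : Fin n → ℝ) :
    ∑ j ∈ univ.filter (fun j => e ∈ Function.update S i t j), g j
      = ∑ j ∈ univ.filter (fun j => e ∈ S j), g j
        + ((if e ∈ t then g i else 0) - (if e ∈ S i then g i else 0)) := by
  classical
  rw [Finset.sum_filter, Finset.sum_filter,
    ← Finset.add_sum_erase _ _ (Finset.mem_univ i),
    ← Finset.add_sum_erase _ (fun j => if e ∈ S j then g j else 0) (Finset.mem_univ i)]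
  have h : ∀ j ∈ univ.erase i,
      (if e ∈ Function.update S i t j then g j else 0) = (if e ∈ S j then g j else 0) := by
    intro j hj
    rw [Function.update_of_ne (Finset.ne_of_mem_erase hj)]
  rw [Finset.sum_congr rfl h, Function.update_self]
  ring

theorem potential_local_min_is_eps_PNE
    (ε : ℝ) (hε : 0 ≤ ε)
    (n : ℕ) (E : Type*) [Fintype E] [DecidableEq E]
    (w : Fin n → ℝ) (hw : ∀ i, 0 < w i)
    (Strat : Fin n → Set (Finset E)) (hStrat : ∀ i, (Strat i).Nonempty)
    (α : E → ℝ) (hα : ∀ e, 0 ≤ α e)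
    (ℓ : E → ℝ → ℝ) (hℓ : ∀ e x, ℓ e x = α e * x)
    (Φ : (Fin n → Finset E) → ℝ)
    (hΦ : ∀ T : Fin n → Finset E,
      Φ T = (1 / 2) * (∑ e, α e * (load w T e) ^ 2) +
        (1 / 2) * ((1 - ε) / (1 + ε)) *
          ∑ e, ∑ i ∈ univ.filter (fun i => e ∈ T i), α e * (w i) ^ 2)
    (S : Fin n → Finset E) (hS : ∀ i, S i ∈ Strat i)
    (hmin : ∀ i, ∀ t ∈ Strat i, Φ S ≤ Φ (Function.update S i t)) :
    ∀ i, ∀ t ∈ Strat i, cost w ℓ S i ≤ (1 + ε) * cost w ℓ (Function.update S i t) i := by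
  intro i t ht
  set S' := Function.update S i t with hS'def
  set κ : ℝ := (1 - ε) / (1 + ε) with hκdef
  have hε1 : (0:ℝ) < 1 + ε := by linarith
  have hκ : κ * (1 + ε) = 1 - ε := div_mul_cancel₀ _ (ne_of_gt hε1)
  have hw' : 0 < w i := hw i
  have hL0 : ∀ e, 0 ≤ load w S e := by
    intro e
    exact Finset.sum_nonneg fun j _ => (hw j).le
  have hwL : ∀ e, e ∈ S i → w i ≤ load w S e := by
    intro e he
    apply Finset.single_le_sum (f := w) (fun j _ => (hw j).le)
    simp [he]
  have hL' : ∀ e, load w S' e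
      = load w S e + ((if e ∈ t then w i else 0) - (if e ∈ S i then w i else 0)) := by
    intro e
    simpa [load, hS'def] using filter_update_sum S i t e w
  set D : E → ℝ := fun e =>
    (1/2) * α e * ((load w S' e)^2 - (load w S e)^2)
      + (1/2) * κ * ((if e ∈ t then α e * (w i)^2 else 0)
          - (if e ∈ S i then α e * (w i)^2 else 0)) with hD
  have hΔ : ∑ e, D e = Φ S' - Φ S := by
    rw [hΦ, hΦ]
    have h2 : ∀ e : E, (∑ j ∈ univ.filter (fun j => e ∈ S' j), α e * (w j)^2)
        = (∑ j ∈ univ.filter (fun j => e ∈ S j), α e * (w j)^2)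
          + ((if e ∈ t then α e * (w i)^2 else 0) - (if e ∈ S i then α e * (w i)^2 else 0)) := by
      intro e
      have := filter_update_sum S i t e (fun j => α e * (w j)^2)
      simpa [hS'def] using this
    rw [Finset.sum_congr rfl (fun e _ => h2 e)]
    have split : ∑ e, D e
        = (1/2) * (∑ e, α e * (load w S' e)^2) - (1/2) * (∑ e, α e * (load w S e)^2)
          + ((1/2) * κ * (∑ e, (if e ∈ t then α e * (w i)^2 else 0))
            - (1/2) * κ * (∑ e, (if e ∈ S i then α e * (w i)^2 else 0))) := by
      simp only [hD]
      rw [Finset.mul_sum, Finset.mul_sum, Finset.mul_sum, Finset.mul_sum,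
        ← Finset.sum_sub_distrib, ← Finset.sum_sub_distrib, ← Finset.sum_add_distrib]
      exact Finset.sum_congr rfl fun e _ => by ring
    rw [split, Finset.sum_add_distrib, Finset.sum_sub_distrib]
    ring
  have hpot : 0 ≤ ∑ e, D e := by
    rw [hΔ]
    have := hmin i t ht
    rw [← hS'def] at this
    linarith
  have hcS : cost w ℓ S i = ∑ e, (if e ∈ S i then α e * load w S e else 0) := by
    simp only [cost, hℓ]
    rw [Finset.sum_ite_mem, Finset.univ_inter]
  have hcS' : cost w ℓ S' i = ∑ e, (if e ∈ t then α e * load w S' e else 0) := by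
    have hSi : S' i = t := Function.update_self i t S
    simp only [cost, hℓ, hSi]
    rw [Finset.sum_ite_mem, Finset.univ_inter]
  have key : ∑ e, (((1 + ε) / w i) * D e)
      ≤ ∑ e, ((1 + ε) * (if e ∈ t then α e * load w S' e else 0)
          - (if e ∈ S i then α e * load w S e else 0)) := by
    apply Finset.sum_le_sum
    intro e _
    have hL := hL' e
    have hL0e := hL0 e
    have hαe := hα e
    rw [div_mul_eq_mul_div, div_le_iff₀ hw']
    by_cases hA : e ∈ t <;> by_cases hB : e ∈ S i <;>
      simp only [hD, hA, hB, if_true, if_false] at hL ⊢ <;> rw [hL]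
    · nlinarith [hκ, mul_nonneg (mul_nonneg hε hαe) hL0e, mul_nonneg hε hαe]
    · nlinarith [(by rw [hκ] : κ * (1 + ε) * (α e * w i ^ 2) = (1 - ε) * (α e * w i ^ 2)),
        mul_nonneg (mul_nonneg hε hαe) (sq_nonneg (w i))]
    · nlinarith [(by rw [hκ] : κ * (1 + ε) * (α e * w i ^ 2) = (1 - ε) * (α e * w i ^ 2)),
        mul_nonneg (mul_nonneg (mul_nonneg hε hαe) hw'.le) (sub_nonneg.2 (hwL e hB))]
    · nlinarith []
  rw [← Finset.mul_sum, Finset.sum_sub_distrib, ← Finset.mul_sum] at key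
  have h0 : 0 ≤ ((1 + ε) / w i) * ∑ e, D e :=
    mul_nonneg (by positivity) hpot
  rw [hcS, hcS']
  linarith
end

section
/- For every unweighted congestion game with n ≥ 1 players and linear latency functions ℓ_e(x) = α_e x (α_e ≥ 0), every pure Nash equilibrium S, and every strategy profile O, it holds that max_{i ∈ [n]} c_i(S) ≤ 4√n · max_{i ∈ [n]} c_i(O). In particular, the price of anarchy with respect to the social function MAX(S) = max_i c_i(S) is O(√n). -/
/-!
Summing the Nash inequalities `c_i(S) ≤ ∑_{e ∈ O_i} α_e (L_e(S) + 1)` over all players and using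
`L_e(O) L_e(S) ≤ (L_e(O)² + L_e(S)²) / 2` gives `SUM(S) ≤ 3 SUM(O) ≤ 3n MAX(O)`. For a single
player, Cauchy–Schwarz with weights `α_e` bounds `∑_{e ∈ O_i} α_e L_e(S)` by
`√((∑_{e ∈ O_i} α_e) SUM(S))`, and `∑_{e ∈ O_i} α_e ≤ c_i(O) ≤ MAX(O)` because every resource of
`O_i` has load at least `1` in `O`. Hence `c_i(S) ≤ √(3n) MAX(O) + MAX(O) ≤ 4 √n MAX(O)`.
-/

open Finset

namespace CG

variable {n : ℕ} {E : Type*} [DecidableEq E]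

def IsPureNash (w : Fin n → ℝ) (ℓ : E → ℝ → ℝ) (Strat : Fin n → Set (Finset E))
    (S : Fin n → Finset E) : Prop :=
  ∀ i, ∀ t ∈ Strat i, cost w ℓ S i ≤ cost w ℓ (Function.update S i t) i

theorem sq_sum_mul_le_sum_mul_sum_mul_sq {ι : Type*} (s : Finset ι) {a : ι → ℝ}
    (ha : ∀ i ∈ s, 0 ≤ a i) (x : ι → ℝ) :
    (∑ i ∈ s, a i * x i) ^ 2 ≤ (∑ i ∈ s, a i) * ∑ i ∈ s, a i * x i ^ 2 :=
  sum_sq_le_sum_mul_sum_of_sq_le_mul s ha (fun i hi => mul_nonneg (ha i hi) (sq_nonneg _))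
    fun i _ => (by ring : (a i * x i) ^ 2 = a i * (a i * x i ^ 2)).le

theorem add_le_four_mul_sqrt_mul {a b m : ℝ} (hn : 0 < n) (hm : 0 ≤ m) (hb : b ≤ m)
    (ha : a ^ 2 ≤ m * (3 * (n * m))) : a + b ≤ 4 * Real.sqrt n * m := by
  have hsqrt : 1 ≤ Real.sqrt n := Real.one_le_sqrt.mpr (by exact_mod_cast hn)
  have ha' : a ≤ 2 * Real.sqrt n * m := by
    refine le_of_sq_le_sq (ha.trans ?_) (by positivity)
    rw [mul_pow, mul_pow, Real.sq_sqrt n.cast_nonneg]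
    nlinarith
  nlinarith

section Load

variable {w : Fin n → ℝ} {P : Fin n → Finset E}

theorem sum_mul_sum_eq_sum_load_mul [Fintype E] (w : Fin n → ℝ) (P : Fin n → Finset E)
    (f : E → ℝ) : ∑ i, w i * ∑ e ∈ P i, f e = ∑ e, load w P e * f e := by
  simp only [load, mul_sum, sum_mul, sum_filter]
  rw [sum_comm]
  refine sum_congr rfl fun i _ => ?_
  simp only [ite_mul, zero_mul]
  rw [sum_ite_mem, univ_inter]

theorem load_nonneg (hw : ∀ i, 0 ≤ w i) (e : E) : 0 ≤ load w P e :=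
  sum_nonneg fun i _ => hw i

theorem le_load_of_mem (hw : ∀ i, 0 ≤ w i) {i : Fin n} {e : E} (he : e ∈ P i) :
    w i ≤ load w P e :=
  single_le_sum (fun j _ => hw j) (by simpa using he)

theorem load_update_le {i : Fin n} (hwi : 0 ≤ w i) (t : Finset E) (e : E) :
    load w (Function.update P i t) e ≤ load w P e + w i := by
  simp only [load, sum_filter]
  calc _ ≤ ∑ j, ((if e ∈ P j then w j else 0) + if j = i then w j else 0) :=
        sum_le_sum fun j _ => by
          rcases eq_or_ne j i with rfl | hji
          · simp only [Function.update_self, if_true]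
            split_ifs <;> linarith
          · simp [hji]
    _ = _ := by simp [sum_add_distrib]

theorem load_le_sq_of_unweighted (hw : ∀ i, w i = 1) (e : E) :
    load w P e ≤ load w P e ^ 2 := by
  have hcard : load w P e = #{i | e ∈ P i} := by simp [load, hw]
  rw [hcard]
  exact_mod_cast Nat.le_self_pow two_ne_zero _

end Load

section Linear

variable {w : Fin n → ℝ} {α : E → ℝ} {ℓ : E → ℝ → ℝ}

theorem cost_eq_of_linear (hℓ : ∀ e x, ℓ e x = α e * x) (P : Fin n → Finset E) (i : Fin n) :
    cost w ℓ P i = ∑ e ∈ P i, α e * load w P e := by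
  simp only [cost, hℓ]

theorem cost_nonneg_of_linear (hw : ∀ i, 0 ≤ w i) (hα : ∀ e, 0 ≤ α e)
    (hℓ : ∀ e x, ℓ e x = α e * x) (P : Fin n → Finset E) (i : Fin n) : 0 ≤ cost w ℓ P i := by
  rw [cost_eq_of_linear hℓ]
  exact sum_nonneg fun e _ => mul_nonneg (hα e) (load_nonneg hw e)

theorem social_le_mul_of_forall_cost_le {P : Fin n → Finset E} {M : ℝ}
    (h : ∀ i, cost w ℓ P i ≤ M) : social w ℓ P ≤ n * M := by
  simpa [social] using sum_le_card_nsmul univ _ M fun i _ => h i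

theorem social_eq_of_unweighted_linear [Fintype E] (hw : ∀ i, w i = 1)
    (hℓ : ∀ e x, ℓ e x = α e * x) (P : Fin n → Finset E) :
    social w ℓ P = ∑ e, α e * load w P e ^ 2 := by
  have h := sum_mul_sum_eq_sum_load_mul w P fun e => α e * load w P e
  simp only [hw, one_mul, ← cost_eq_of_linear hℓ] at h
  rw [social, h]
  exact sum_congr rfl fun e _ => by ring

theorem sum_le_cost_of_unweighted_linear (hw : ∀ i, w i = 1) (hα : ∀ e, 0 ≤ α e)
    (hℓ : ∀ e x, ℓ e x = α e * x) (P : Fin n → Finset E) (i : Fin n) :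
    ∑ e ∈ P i, α e ≤ cost w ℓ P i := by
  have hw0 : ∀ j, 0 ≤ w j := fun j => (hw j).symm ▸ zero_le_one
  rw [cost_eq_of_linear hℓ]
  refine sum_le_sum fun e he => le_mul_of_one_le_right (hα e) ?_
  simpa [hw] using le_load_of_mem hw0 he

theorem sq_sum_mul_load_le_mul_social [Fintype E] (hw : ∀ i, w i = 1) (hα : ∀ e, 0 ≤ α e)
    (hℓ : ∀ e x, ℓ e x = α e * x) (S : Fin n → Finset E) (s : Finset E) :
    (∑ e ∈ s, α e * load w S e) ^ 2 ≤ (∑ e ∈ s, α e) * social w ℓ S := by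
  have hterm : ∀ e, 0 ≤ α e * load w S e ^ 2 := fun e => mul_nonneg (hα e) (sq_nonneg _)
  grw [sq_sum_mul_le_sum_mul_sum_mul_sq s (fun e _ => hα e), social_eq_of_unweighted_linear hw hℓ]
  exact mul_le_mul_of_nonneg_left
    (sum_le_sum_of_subset_of_nonneg (subset_univ s) fun e _ _ => hterm e)
    (sum_nonneg fun e _ => hα e)

variable {Strat : Fin n → Set (Finset E)} {S O : Fin n → Finset E}

theorem cost_le_of_isPureNash_of_linear (hw : ∀ i, 0 ≤ w i) (hα : ∀ e, 0 ≤ α e)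
    (hℓ : ∀ e x, ℓ e x = α e * x) (hS : IsPureNash w ℓ Strat S) {i : Fin n}
    (hOi : O i ∈ Strat i) : cost w ℓ S i ≤ ∑ e ∈ O i, α e * (load w S e + w i) := by
  refine (hS i (O i) hOi).trans ?_
  rw [cost_eq_of_linear hℓ, Function.update_self]
  exact sum_le_sum fun e _ => mul_le_mul_of_nonneg_left (load_update_le (hw i) _ e) (hα e)

/-- The sharp bound is `5 / 2`; the cruder `3` is what `y ≤ y²` for integral loads gives. -/
theorem social_le_three_mul_of_isPureNash [Fintype E] (hw : ∀ i, w i = 1) (hα : ∀ e, 0 ≤ α e)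
    (hℓ : ∀ e x, ℓ e x = α e * x) (hO : ∀ i, O i ∈ Strat i) (hS : IsPureNash w ℓ Strat S) :
    social w ℓ S ≤ 3 * social w ℓ O := by
  have hw0 : ∀ j, 0 ≤ w j := fun j => (hw j).symm ▸ zero_le_one
  have hsum : social w ℓ S ≤ ∑ e, load w O e * (α e * (load w S e + 1)) := by
    rw [← one_mul (social w ℓ S), ← sum_mul_sum_eq_sum_load_mul, social, mul_sum]
    exact sum_le_sum fun i _ => by
      simpa only [hw, one_mul] using cost_le_of_isPureNash_of_linear hw0 hα hℓ hS (hO i)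
  have hpoint : ∀ e, load w O e * (α e * (load w S e + 1))
      ≤ α e * load w S e ^ 2 / 2 + 3 / 2 * (α e * load w O e ^ 2) := fun e => by
    nlinarith [mul_nonneg (hα e) (sq_nonneg (load w S e - load w O e)),
      mul_le_mul_of_nonneg_left (load_le_sq_of_unweighted hw e (P := O)) (hα e)]
  have := hsum.trans (sum_le_sum fun e _ => hpoint e)
  rw [sum_add_distrib, ← sum_div, ← mul_sum, ← social_eq_of_unweighted_linear hw hℓ,
    ← social_eq_of_unweighted_linear hw hℓ] at this
  linarith

end Linear

end CG

open CG

theorem poa_max_unweighted_linear_general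
    (n : ℕ) (hn : 0 < n)
    (E : Type*) [Fintype E] [DecidableEq E]
    (w : Fin n → ℝ) (hw : ∀ i, w i = 1)
    (Strat : Fin n → Set (Finset E))
    (α : E → ℝ) (hα : ∀ e, 0 ≤ α e)
    (ℓ : E → ℝ → ℝ) (hℓ : ∀ e x, ℓ e x = α e * x)
    (S O : Fin n → Finset E)
    (hO : ∀ i, O i ∈ Strat i)
    (hNE : ∀ i, ∀ t ∈ Strat i, cost w ℓ S i ≤ cost w ℓ (Function.update S i t) i) :
    (⨆ i, cost w ℓ S i) ≤ 4 * Real.sqrt n * ⨆ i, cost w ℓ O i := by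
  have : Nonempty (Fin n) := ⟨⟨0, hn⟩⟩
  have hw0 : ∀ i, 0 ≤ w i := fun i => (hw i).symm ▸ zero_le_one
  set M := ⨆ i, cost w ℓ O i
  have hOM : ∀ i, cost w ℓ O i ≤ M := le_ciSup (Set.finite_range _).bddAbove
  have hM : 0 ≤ M := (cost_nonneg_of_linear hw0 hα hℓ O ⟨0, hn⟩).trans (hOM _)
  have hSUM : social w ℓ S ≤ 3 * (n * M) := by
    grw [social_le_three_mul_of_isPureNash hw hα hℓ hO hNE, social_le_mul_of_forall_cost_le hOM]
  refine ciSup_le fun i => ?_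
  have hB : ∑ e ∈ O i, α e ≤ M := (sum_le_cost_of_unweighted_linear hw hα hℓ O i).trans (hOM i)
  have hA : (∑ e ∈ O i, α e * load w S e) ^ 2 ≤ M * (3 * (n * M)) := by
    grw [sq_sum_mul_load_le_mul_social hw hα hℓ S (O i), hSUM, hB]
    exact sum_nonneg fun e _ => hα e
  calc cost w ℓ S i ≤ ∑ e ∈ O i, α e * load w S e + ∑ e ∈ O i, α e := by
        simpa only [hw, mul_add, mul_one, sum_add_distrib]
          using cost_le_of_isPureNash_of_linear hw0 hα hℓ hNE (hO i)
    _ ≤ 4 * Real.sqrt n * M := add_le_four_mul_sqrt_mul hn hM hB hA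

theorem poa_max_unweighted_linear
    (n : ℕ) (hn : 0 < n)
    (E : Type*) [Fintype E] [DecidableEq E]
    (w : Fin n → ℝ) (hw : ∀ i, w i = 1)
    (Strat : Fin n → Set (Finset E)) (hStrat : ∀ i, (Strat i).Nonempty)
    (α : E → ℝ) (hα : ∀ e, 0 ≤ α e)
    (ℓ : E → ℝ → ℝ) (hℓ : ∀ e x, ℓ e x = α e * x)
    (S O : Fin n → Finset E)
    (hS : ∀ i, S i ∈ Strat i) (hO : ∀ i, O i ∈ Strat i)
    (hNE : ∀ i, ∀ t ∈ Strat i, cost w ℓ S i ≤ cost w ℓ (Function.update S i t) i) :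
    (⨆ i, cost w ℓ S i) ≤ 4 * Real.sqrt n * ⨆ i, cost w ℓ O i :=
  poa_max_unweighted_linear_general n hn E w hw Strat α hα ℓ hℓ S O hO hNE
end

section
/- For every resource allocation game with fair cost sharing with n players, there exists a pure Nash equilibrium S such that Σ_{e : n_e(S) ≥ 1} c_e ≤ H_n · Σ_{e : n_e(O) ≥ 1} c_e for every strategy profile O, where H_n = Σ_{k=1}^n 1/k is the n-th harmonic number. In particular, the price of stability of such games is at most H_n. -/
open Finset

open CG

/-- The cost of player `i` in a resource allocation game with fair cost sharing. -/
noncomputable def shareCost {n : ℕ} {E : Type*} [Fintype E] [DecidableEq E]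
    (cE : E → ℝ) (S : Fin n → Finset E) (i : Fin n) : ℝ :=
  ∑ e ∈ S i, cE e / ((univ.filter fun j => e ∈ S j).card : ℝ)

/-- Partial harmonic number. -/
noncomputable def Hm (m : ℕ) : ℝ := ∑ k ∈ Finset.range m, 1 / (k + 1)

lemma Hm_nonneg (m : ℕ) : 0 ≤ Hm m :=
  Finset.sum_nonneg fun k _ => by positivity

lemma Hm_mono : Monotone Hm := fun a b h =>
  Finset.sum_le_sum_of_subset_of_nonneg (Finset.range_subset_range.2 h) (fun k _ _ => by positivity)

lemma Hm_succ (m : ℕ) : Hm (m + 1) = Hm m + 1 / (m + 1) := by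
  simp [Hm, Finset.sum_range_succ]

lemma Hm_one : Hm 1 = 1 := by simp [Hm]

/-- Rosenthal's potential for fair cost sharing. -/
noncomputable def Phi {n : ℕ} {E : Type*} [Fintype E] [DecidableEq E]
    (cE : E → ℝ) (S : Fin n → Finset E) : ℝ :=
  ∑ e, cE e * Hm ((univ.filter fun j => e ∈ S j).card)

lemma card_split {n : ℕ} (p : Fin n → Prop) [DecidablePred p] (i : Fin n) :
    (univ.filter p).card = (univ.filter fun j => j ≠ i ∧ p j).card
      + if p i then 1 else 0 := by
  have he : (univ.filter fun j => j ≠ i ∧ p j) = (univ.erase i).filter p := by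
    ext j; simp [and_comm]
  rw [he, Finset.card_filter, Finset.card_filter,
      ← Finset.sum_erase_add univ _ (Finset.mem_univ i)]

lemma potential_update {n : ℕ} {E : Type*} [Fintype E] [DecidableEq E] (cE : E → ℝ)
    (S : Fin n → Finset E) (i : Fin n) (t : Finset E) :
    Phi cE (Function.update S i t) - Phi cE S
      = shareCost cE (Function.update S i t) i - shareCost cE S i := by
  classical
  have hsc : ∀ (T : Fin n → Finset E), shareCost cE T i
      = ∑ e, if e ∈ T i then cE e / ((univ.filter fun j => e ∈ T j).card : ℝ) else 0 := by
    intro T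
    rw [shareCost, ← Finset.sum_filter]
    congr 1
    ext e; simp
  rw [hsc, hsc, Phi, Phi, ← Finset.sum_sub_distrib, ← Finset.sum_sub_distrib]
  apply Finset.sum_congr rfl
  intro e _
  have hS : (univ.filter fun j => e ∈ S j).card
      = (univ.filter fun j => j ≠ i ∧ e ∈ S j).card + if e ∈ S i then 1 else 0 :=
    card_split _ i
  have hT : (univ.filter fun j => e ∈ Function.update S i t j).card
      = (univ.filter fun j => j ≠ i ∧ e ∈ S j).card + if e ∈ t then 1 else 0 := by
    rw [card_split (fun j => e ∈ Function.update S i t j) i]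
    simp only [Function.update_self]
    congr 2
    apply Finset.filter_congr
    intro j _
    by_cases hj : j = i <;> simp [hj, Function.update_of_ne]
  set m := (univ.filter fun j => j ≠ i ∧ e ∈ S j).card with hm
  rw [hS, hT]
  have hu : (e ∈ Function.update S i t i) = (e ∈ t) := by simp
  by_cases ht : e ∈ t <;> by_cases hs : e ∈ S i <;>
    simp only [ht, hs, hu, if_true, if_false, eq_self_iff_true] <;>
    push_cast [Hm_succ] <;> ring

theorem pos_fair_cost_sharing
    (n : ℕ) (E : Type*) [Fintype E] [DecidableEq E]
    (cE : E → ℝ) (hc : ∀ e, 0 ≤ cE e)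
    (Strat : Fin n → Set (Finset E)) (hStrat : ∀ i, (Strat i).Nonempty) :
    ∃ S : Fin n → Finset E, (∀ i, S i ∈ Strat i) ∧
      (∀ i, ∀ t ∈ Strat i, shareCost cE S i ≤ shareCost cE (Function.update S i t) i) ∧
      ∀ O : Fin n → Finset E, (∀ i, O i ∈ Strat i) →
        ∑ e ∈ univ.filter (fun e => 0 < (univ.filter fun i => e ∈ S i).card), cE e ≤
          (∑ k ∈ Finset.range n, (1 : ℝ) / (k + 1)) *
            ∑ e ∈ univ.filter (fun e => 0 < (univ.filter fun i => e ∈ O i).card), cE e := by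
  classical
  set P : Set (Fin n → Finset E) := {S | ∀ i, S i ∈ Strat i} with hP
  have hPne : P.Nonempty := ⟨fun i => (hStrat i).choose, fun i => (hStrat i).choose_spec⟩
  obtain ⟨S, hSP, hSmin⟩ := Set.exists_min_image P (Phi cE) (Set.toFinite P) hPne
  refine ⟨S, hSP, ?_, ?_⟩
  · intro i t ht
    have h1 : Phi cE S ≤ Phi cE (Function.update S i t) := by
      apply hSmin
      intro j
      by_cases hj : j = i
      · subst hj; simpa using ht
      · simpa [Function.update_of_ne hj] using hSP j
    have h2 := potential_update cE S i t
    linarith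
  · intro O hO
    have hSO : Phi cE S ≤ Phi cE O := hSmin O hO
    have h1 : ∑ e ∈ univ.filter (fun e => 0 < (univ.filter fun i => e ∈ S i).card), cE e
        ≤ Phi cE S := by
      calc ∑ e ∈ univ.filter (fun e => 0 < (univ.filter fun i => e ∈ S i).card), cE e
          ≤ ∑ e ∈ univ.filter (fun e => 0 < (univ.filter fun i => e ∈ S i).card),
              cE e * Hm ((univ.filter fun j => e ∈ S j).card) := by
            apply Finset.sum_le_sum
            intro e he
            have hpos : 0 < (univ.filter fun j => e ∈ S j).card :=
              (Finset.mem_filter.1 he).2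
            have : (1 : ℝ) ≤ Hm ((univ.filter fun j => e ∈ S j).card) := by
              rw [← Hm_one]; exact Hm_mono hpos
            exact le_mul_of_one_le_right (hc e) this
        _ ≤ ∑ e, cE e * Hm ((univ.filter fun j => e ∈ S j).card) := by
            apply Finset.sum_le_sum_of_subset_of_nonneg (Finset.filter_subset _ _)
            intro e _ _
            exact mul_nonneg (hc e) (Hm_nonneg _)
        _ = Phi cE S := rfl
    have h2 : Phi cE O ≤ (∑ k ∈ Finset.range n, (1 : ℝ) / (k + 1)) *
        ∑ e ∈ univ.filter (fun e => 0 < (univ.filter fun i => e ∈ O i).card), cE e := by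
      have heq : Phi cE O = ∑ e ∈ univ.filter (fun e => 0 < (univ.filter fun i => e ∈ O i).card),
          cE e * Hm ((univ.filter fun j => e ∈ O j).card) := by
        rw [Phi]
        refine (Finset.sum_filter_of_ne ?_).symm
        intro e _ hne
        rcases Nat.eq_zero_or_pos ((univ.filter fun j => e ∈ O j).card) with h0 | h0
        · exact absurd (by simp [h0, Hm]) hne
        · exact h0
      rw [heq, Finset.mul_sum]
      apply Finset.sum_le_sum
      intro e _
      have hcard : ((univ.filter fun j => e ∈ O j).card) ≤ n := by
        calc (univ.filter fun j => e ∈ O j).card ≤ (univ : Finset (Fin n)).card :=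
              Finset.card_filter_le _ _
          _ = n := by simp
      have hmono : Hm ((univ.filter fun j => e ∈ O j).card) ≤ Hm n := Hm_mono hcard
      have hHn : Hm n = ∑ k ∈ Finset.range n, (1 : ℝ) / (k + 1) := rfl
      calc cE e * Hm ((univ.filter fun j => e ∈ O j).card) ≤ cE e * Hm n :=
            mul_le_mul_of_nonneg_left hmono (hc e)
        _ = (∑ k ∈ Finset.range n, (1 : ℝ) / (k + 1)) * cE e := by rw [hHn]; ring
    linarith
end

section
/- For all nonnegative integers z, K and O, it holds that K² − (2z+1)(K·O + O) + (z² + 3z + 1)·O² ≥ 0. -/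
theorem dual_feasibility_inequality (z K O : ℕ) :
    (0 : ℤ) ≤ (K : ℤ) ^ 2 - (2 * z + 1) * ((K : ℤ) * O + O) + (z ^ 2 + 3 * z + 1) * (O : ℤ) ^ 2 := by
  have hz : (0:ℤ) ≤ (z:ℤ) := Int.natCast_nonneg z
  have hK : (0:ℤ) ≤ (K:ℤ) := Int.natCast_nonneg K
  match O with
  | 0 => push_cast; nlinarith [sq_nonneg ((K:ℤ))]
  | 1 =>
      push_cast
      have h : (0:ℤ) ≤ ((K:ℤ) - z) * ((K:ℤ) - z - 1) := by
        rcases le_or_gt ((K:ℤ) - z) 0 with h | h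
        · nlinarith
        · nlinarith [Int.add_one_le_iff.mpr h]
      nlinarith
  | (n+2) =>
      have hO : (2:ℤ) ≤ ((n:ℤ)+2) := by linarith [Int.natCast_nonneg n]
      push_cast
      nlinarith [sq_nonneg (2*(K:ℤ) - (2*z+1)*((n:ℤ)+2)), sq_nonneg ((n:ℤ)+2), hz, hO,
        mul_nonneg hz (sq_nonneg ((n:ℤ)+2))]
end
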